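/- arXiv:1505.06964 — 10 statements merged into one kernel-verified Lean document; each statement's English description precedes it below -/
import Mathlib

section
/- Let n ≥ 2 and let Q be the quadratic form on EuclideanSpace ℝ (Fin n) given by Q x = -‖x‖², with Clifford algebra Cl_n = CliffordAlgebra Q and canonical embedding ι. The Cauchy kernel G : EuclideanSpace ℝ (Fin n) \ {0} → Cl_n defined by G(x) = -‖x‖^{-n} • ι(x) is both left monogenic and right monogenic away from the origin: for every x ≠ 0, ∑_i ι(e_i) * (∂_i G)(x) = 0 and ∑_i (∂_i G)(x) * ι(e_i) = 0. -/
open Function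
open scoped ENNReal

noncomputable section

/-- The inclusion of finitely supported functions into `ℓ^∞`. -/
def finsuppToLp (ι : Type*) : (ι →₀ ℝ) →ₗ[ℝ] lp (fun _ : ι => ℝ) ∞ where
  toFun v := ⟨fun i => v i, by
    apply memℓp_infty
    apply Set.Finite.bddAbove
    apply Set.Finite.subset ((v.support.finite_toSet.image (fun i => ‖v i‖)).insert 0)
    rintro - ⟨i, rfl⟩
    by_cases h : v i = 0
    · simp [h]
    · exact Set.mem_insert_of_mem _ ⟨i, by simpa [Finsupp.mem_support_iff] using h, rfl⟩⟩
  map_add' v w := by ext i; rfl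
  map_smul' c v := by ext i; rfl

lemma finsuppToLp_injective (ι : Type*) : Injective (finsuppToLp ι) := by
  intro v w h
  ext i
  exact congrArg (fun f : lp (fun _ : ι => ℝ) ∞ => (f : ι → ℝ) i) h

/-- A norm on an arbitrary real vector space, obtained from a Hamel basis and the embedding
into `ℓ^∞`.  This makes the Fréchet derivative available for Clifford-algebra valued maps;
since the Clifford algebra of a finite-dimensional quadratic space is finite dimensional,
all norms on it are equivalent, so the statements below do not depend on this choice. -/
def Module.toNormedAddCommGroup (V : Type*) [AddCommGroup V] [Module ℝ V] :
    NormedAddCommGroup V :=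
  NormedAddCommGroup.induced V _
    ((finsuppToLp _).comp (Basis.ofVectorSpace ℝ V).repr.toLinearMap)
    ((finsuppToLp_injective _).comp (Basis.ofVectorSpace ℝ V).repr.injective)

def Module.toNormedSpace (V : Type*) [AddCommGroup V] [Module ℝ V] :
    @NormedSpace ℝ V _ (Module.toNormedAddCommGroup V).toSeminormedAddCommGroup :=
  NormedSpace.induced ℝ V _ ((finsuppToLp _).comp (Basis.ofVectorSpace ℝ V).repr.toLinearMap)

noncomputable instance {n : ℕ} (Q : QuadraticForm ℝ (EuclideanSpace ℝ (Fin n))) :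
    NormedAddCommGroup (CliffordAlgebra Q) := Module.toNormedAddCommGroup _

noncomputable instance {n : ℕ} (Q : QuadraticForm ℝ (EuclideanSpace ℝ (Fin n))) :
    NormedSpace ℝ (CliffordAlgebra Q) := Module.toNormedSpace _

/-- The standard orthonormal basis vector `e i` of Euclidean space. -/
def e {n : ℕ} (i : Fin n) : EuclideanSpace ℝ (Fin n) := EuclideanSpace.single i 1

/-! Differentiating `‖y‖ ^ p • ι y` at `x ≠ 0` in direction `v` gives
`‖x‖ ^ p • ι v + p ‖x‖ ^ (p - 2) ⟪x, v⟫ • ι x`. Contracting with `ι (e i)` on either side and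
using `∑ ι (e i) ^ 2 = -n`, `∑ ⟪x, e i⟫ ι (e i) = ι x` and `ι x ^ 2 = -‖x‖ ^ 2`, both Dirac sums
of `‖y‖ ^ p • ι y` equal `-(n + p) ‖x‖ ^ p`, which vanishes for the Cauchy kernel, `p = -n`. -/

/- The norm instances above are built from semireducible definitions, so instance search cannot
unify their additive group and scalar action with the algebra's own; these two consequences
have to be supplied by hand. -/
instance cliffordAlgebra_isTopologicalAddGroup {n : ℕ}
    (Q : QuadraticForm ℝ (EuclideanSpace ℝ (Fin n))) : IsTopologicalAddGroup (CliffordAlgebra Q) :=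
  SeminormedAddCommGroup.toIsTopologicalAddGroup

instance cliffordAlgebra_isBoundedSMul {n : ℕ}
    (Q : QuadraticForm ℝ (EuclideanSpace ℝ (Fin n))) : IsBoundedSMul ℝ (CliffordAlgebra Q) :=
  NormedSpace.toIsBoundedSMul

open CliffordAlgebra
open scoped InnerProductSpace

section Calculus

variable {E F : Type*} [NormedAddCommGroup E] [InnerProductSpace ℝ E]
  [NormedAddCommGroup F] [NormedSpace ℝ F]

theorem hasStrictFDerivAt_norm_rpow_of_ne_zero (p : ℝ) {x : E} (hx : x ≠ 0) :
    HasStrictFDerivAt (fun y : E ↦ ‖y‖ ^ p) ((p * ‖x‖ ^ (p - 2)) • innerSL ℝ x) x := by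
  convert (hasStrictFDerivAt_norm_sq x).rpow_const (p := p / 2) (by simp [hx]) using 1
  · ext y
    rw [← Real.rpow_natCast, ← Real.rpow_mul (norm_nonneg y)]
    ring_nf
  · rw [← Real.rpow_natCast, ← Real.rpow_mul (norm_nonneg x), ← Nat.cast_smul_eq_nsmul ℝ,
      smul_smul]
    ring_nf

theorem fderiv_mul_norm_rpow_smul_apply (L : E →L[ℝ] F) (c p : ℝ) {x : E} (hx : x ≠ 0) (v : E) :
    fderiv ℝ (fun y ↦ (c * ‖y‖ ^ p) • L y) x v =
      (c * ‖x‖ ^ p) • L v + ⟪x, v⟫_ℝ • (c * p * ‖x‖ ^ (p - 2)) • L x := by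
  rw [HasFDerivAt.fderiv (f := fun y ↦ (c * ‖y‖ ^ p) • L y)
    (((hasStrictFDerivAt_norm_rpow_of_ne_zero p hx).hasFDerivAt.const_mul c).smul L.hasFDerivAt)]
  simp only [add_apply, smul_apply, ContinuousLinearMap.smulRight_apply,
    innerSL_apply_apply, smul_smul]
  ring_nf

end Calculus

section Clifford

variable {E κ : Type*} [NormedAddCommGroup E] [InnerProductSpace ℝ E] [Fintype κ]
  (Q : QuadraticForm ℝ E) (b : OrthonormalBasis κ ℝ E)

theorem sum_ι_mul_ι_self : ∑ i, ι Q (b i) * ι Q (b i) = algebraMap ℝ _ (∑ i, Q (b i)) := by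
  simp only [ι_sq_scalar, map_sum]

theorem sum_ι_mul_inner_smul (x : E) (w : CliffordAlgebra Q) :
    ∑ i, ι Q (b i) * (⟪x, b i⟫_ℝ • w) = ι Q x * w := by
  conv_rhs => rw [← b.sum_repr' x]
  simp only [map_sum, map_smul, Finset.sum_mul, smul_mul_assoc, mul_smul_comm, real_inner_comm]

theorem sum_inner_smul_mul_ι (x : E) (w : CliffordAlgebra Q) :
    ∑ i, (⟪x, b i⟫_ℝ • w) * ι Q (b i) = w * ι Q x := by
  conv_rhs => rw [← b.sum_repr' x]
  simp only [map_sum, map_smul, Finset.mul_sum, smul_mul_assoc, mul_smul_comm, real_inner_comm]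

theorem sum_ι_mul_smul_ι_add_inner_smul (a c : ℝ) (x : E) :
    ∑ i, ι Q (b i) * (a • ι Q (b i) + ⟪x, b i⟫_ℝ • c • ι Q x) =
      algebraMap ℝ _ (a * ∑ i, Q (b i) + c * Q x) := by
  simp_rw [mul_add, mul_smul_comm a]
  rw [Finset.sum_add_distrib, ← Finset.smul_sum, sum_ι_mul_ι_self, sum_ι_mul_inner_smul,
    mul_smul_comm, ι_sq_scalar]
  simp only [Algebra.smul_def, map_add, map_mul]

theorem sum_smul_ι_add_inner_smul_mul_ι (a c : ℝ) (x : E) :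
    ∑ i, (a • ι Q (b i) + ⟪x, b i⟫_ℝ • c • ι Q x) * ι Q (b i) =
      algebraMap ℝ _ (a * ∑ i, Q (b i) + c * Q x) := by
  simp_rw [add_mul, smul_mul_assoc a]
  rw [Finset.sum_add_distrib, ← Finset.smul_sum, sum_ι_mul_ι_self, sum_inner_smul_mul_ι,
    smul_mul_assoc, ι_sq_scalar]
  simp only [Algebra.smul_def, map_add, map_mul]

end Clifford

section Euclidean

variable {n : ℕ} {Q : QuadraticForm ℝ (EuclideanSpace ℝ (Fin n))}

theorem e_eq_basisFun :
    (e : Fin n → EuclideanSpace ℝ (Fin n)) = EuclideanSpace.basisFun (Fin n) ℝ :=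
  funext fun i ↦ (EuclideanSpace.basisFun_apply (Fin n) ℝ i).symm

theorem fderiv_mul_norm_rpow_smul_ι_apply (c p : ℝ) {x : EuclideanSpace ℝ (Fin n)} (hx : x ≠ 0)
    (v : EuclideanSpace ℝ (Fin n)) :
    fderiv ℝ (fun y ↦ (c * ‖y‖ ^ p) • ι Q y) x v =
      (c * ‖x‖ ^ p) • ι Q v + ⟪x, v⟫_ℝ • (c * p * ‖x‖ ^ (p - 2)) • ι Q x :=
  fderiv_mul_norm_rpow_smul_apply (F := CliffordAlgebra Q) (ι Q).toContinuousLinearMap c p hx v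

variable (hQ : ∀ x, Q x = -‖x‖ ^ 2)
include hQ

theorem mul_norm_rpow_mul_sum_add_mul (c p : ℝ) {x : EuclideanSpace ℝ (Fin n)} (hx : x ≠ 0) :
    c * ‖x‖ ^ p * ∑ i, Q (EuclideanSpace.basisFun (Fin n) ℝ i) + c * p * ‖x‖ ^ (p - 2) * Q x =
      -c * (n + p) * ‖x‖ ^ p := by
  have hx' : ‖x‖ ≠ 0 := norm_ne_zero_iff.mpr hx
  simp only [hQ, (EuclideanSpace.basisFun (Fin n) ℝ).orthonormal.1, Finset.sum_const,
    Finset.card_univ, Fintype.card_fin]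
  rw [show (2 : ℝ) = (2 : ℕ) by norm_num, Real.rpow_sub_natCast hx']
  field_simp
  ring

theorem sum_ι_mul_fderiv_mul_norm_rpow_smul_ι (c p : ℝ) {x : EuclideanSpace ℝ (Fin n)}
    (hx : x ≠ 0) :
    ∑ i, ι Q (e i) * fderiv ℝ (fun y ↦ (c * ‖y‖ ^ p) • ι Q y) x (e i) =
      algebraMap ℝ _ (-c * (n + p) * ‖x‖ ^ p) := by
  simp only [fderiv_mul_norm_rpow_smul_ι_apply c p hx, e_eq_basisFun,
    sum_ι_mul_smul_ι_add_inner_smul, mul_norm_rpow_mul_sum_add_mul hQ c p hx]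

theorem sum_fderiv_mul_norm_rpow_smul_ι_mul_ι (c p : ℝ) {x : EuclideanSpace ℝ (Fin n)}
    (hx : x ≠ 0) :
    ∑ i, fderiv ℝ (fun y ↦ (c * ‖y‖ ^ p) • ι Q y) x (e i) * ι Q (e i) =
      algebraMap ℝ _ (-c * (n + p) * ‖x‖ ^ p) := by
  simp only [fderiv_mul_norm_rpow_smul_ι_apply c p hx, e_eq_basisFun,
    sum_smul_ι_add_inner_smul_mul_ι, mul_norm_rpow_mul_sum_add_mul hQ c p hx]

end Euclidean

theorem cauchyKernel_monogenic_general (n : ℕ)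
    (Q : QuadraticForm ℝ (EuclideanSpace ℝ (Fin n)))
    (hQ : ∀ x, Q x = -‖x‖ ^ 2)
    (G : EuclideanSpace ℝ (Fin n) → CliffordAlgebra Q)
    (hG : ∀ x, G x = -((‖x‖ ^ n)⁻¹ • CliffordAlgebra.ι Q x))
    (x : EuclideanSpace ℝ (Fin n)) (hx : x ≠ 0) :
    (∑ i, CliffordAlgebra.ι Q (e i) * fderiv ℝ G x (e i) = 0) ∧
    (∑ i, fderiv ℝ G x (e i) * CliffordAlgebra.ι Q (e i) = 0) := by
  obtain rfl : G = fun y ↦ (-1 * ‖y‖ ^ (-(n : ℝ))) • ι Q y := by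
    ext y
    rw [hG, Real.rpow_neg (norm_nonneg y), Real.rpow_natCast, neg_one_mul, neg_smul]
  simp only [sum_ι_mul_fderiv_mul_norm_rpow_smul_ι hQ _ _ hx,
    sum_fderiv_mul_norm_rpow_smul_ι_mul_ι hQ _ _ hx, add_neg_cancel, mul_zero, zero_mul,
    map_zero, and_self]

/-- The Cauchy kernel `G x = -‖x‖⁻ⁿ • ι x` is left and right monogenic
away from the origin. -/
theorem cauchyKernel_monogenic (n : ℕ) (hn : 2 ≤ n)
    (Q : QuadraticForm ℝ (EuclideanSpace ℝ (Fin n)))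
    (hQ : ∀ x, Q x = -‖x‖ ^ 2)
    (G : EuclideanSpace ℝ (Fin n) → CliffordAlgebra Q)
    (hG : ∀ x, G x = -((‖x‖ ^ n)⁻¹ • CliffordAlgebra.ι Q x))
    (x : EuclideanSpace ℝ (Fin n)) (hx : x ≠ 0) :
    (∑ i, CliffordAlgebra.ι Q (e i) * fderiv ℝ G x (e i) = 0) ∧
    (∑ i, fderiv ℝ G x (e i) * CliffordAlgebra.ι Q (e i) = 0) :=
  cauchyKernel_monogenic_general n Q hQ G hG x hx
end
end

section
/- Let n ≥ 1 and work on EuclideanSpace ℝ (Fin (n+1)) with quadratic form Q x = -‖x‖², Clifford algebra Cl = CliffordAlgebra Q and embedding ι. Define the Dirac–Beltrami operator on smooth functions f : ℝ^{n+1} \ {0} → Cl by (Γ f)(x) = -ι(x) * (D f)(x) - ∑_i x_i (∂_i f)(x). Let f be smooth on ℝ^{n+1} \ {0} and positively homogeneous of degree 0 (f(t x) = f(x) for all t > 0, x ≠ 0), and let g(y) = (‖y‖⁻¹ • ι(y)) * f(y). Then the intertwining identity Γω + ωΓ = nω holds: for every x with ‖x‖ = 1, (Γ g)(x) + ι(x)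 * (Γ f)(x) = n • (ι(x) * f(x)). -/
open Function
open scoped ENNReal

noncomputable section

/-- The Dirac operator on Clifford-algebra valued functions. -/
def Dirac {n : ℕ} (Q : QuadraticForm ℝ (EuclideanSpace ℝ (Fin n)))
    (f : EuclideanSpace ℝ (Fin n) → CliffordAlgebra Q)
    (x : EuclideanSpace ℝ (Fin n)) : CliffordAlgebra Q :=
  ∑ i, CliffordAlgebra.ι Q (e i) * fderiv ℝ f x (e i)

/-- The Dirac–Beltrami (Gamma) operator `Γ = -x·D - E`, with `E` the Euler operator. -/
def Gamma {n : ℕ} (Q : QuadraticForm ℝ (EuclideanSpace ℝ (Fin n)))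
    (f : EuclideanSpace ℝ (Fin n) → CliffordAlgebra Q)
    (x : EuclideanSpace ℝ (Fin n)) : CliffordAlgebra Q :=
  -(CliffordAlgebra.ι Q x * Dirac Q f x) - ∑ i, x i • fderiv ℝ f x (e i)

namespace CliffordFinite
open CliffordAlgebra

variable {M : Type*} [AddCommGroup M] [Module ℝ M] {N : ℕ}
variable (b : Module.Basis (Fin N) ℝ M) (Q : QuadraticForm ℝ M)

def P (s : Finset (Fin N)) : CliffordAlgebra Q :=
  ((s.sort (· ≤ ·)).map fun i => ι Q (b i)).prod

def Sc (c : ℕ) : Submodule ℝ (CliffordAlgebra Q) :=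
  Submodule.span ℝ (P b Q '' {s | s.card ≤ c})

lemma Sc_mono {c d : ℕ} (h : c ≤ d) : Sc b Q c ≤ Sc b Q d :=
  Submodule.span_mono (Set.image_mono fun _ hs => le_trans hs h)

lemma P_empty : P b Q ∅ = 1 := by simp [P]

lemma P_insert {j : Fin N} {s : Finset (Fin N)} (hj : j ∉ s) (hle : ∀ i ∈ s, j ≤ i) :
    P b Q (insert j s) = ι Q (b j) * P b Q s := by
  rw [P, Finset.sort_insert _ hle hj, List.map_cons, List.prod_cons]
  rfl

lemma key (μ : ℕ) : ∀ (i : Fin N) (s : Finset (Fin N)), s.card * N + i.val ≤ μ →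
    ι Q (b i) * P b Q s ∈ Sc b Q (s.card + 1) := by
  induction μ using Nat.strong_induction_on with
  | _ μ IH =>
    intro i s hμ
    have hN : 0 < N := i.pos
    by_cases hall : ∀ m ∈ s, i < m
    · have hi : i ∉ s := fun h => lt_irrefl i (hall i h)
      have hP : ι Q (b i) * P b Q s = P b Q (insert i s) :=
        (P_insert b Q hi fun m hm => (hall m hm).le).symm
      rw [hP]
      exact Submodule.subset_span
        ⟨insert i s, by simp [Finset.card_insert_of_notMem hi], rfl⟩
    · push_neg at hall
      obtain ⟨m₀, hm₀, him⟩ := hall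
      have hne : s.Nonempty := ⟨m₀, hm₀⟩
      set j := s.min' hne with hjdef
      set s' := s.erase j with hs'def
      have hjs : j ∈ s := s.min'_mem hne
      have hjs' : j ∉ s' := Finset.notMem_erase _ _
      have hins : insert j s' = s := Finset.insert_erase hjs
      have hlt : ∀ m ∈ s', j < m := fun m hm => Finset.min'_lt_of_mem_erase_min' _ hne hm
      have hcard : s'.card + 1 = s.card := by
        rw [hs'def, Finset.card_erase_of_mem hjs]
        have := Finset.card_pos.mpr hne
        omega
      have hPs : P b Q s = ι Q (b j) * P b Q s' := by
        conv_lhs => rw [← hins]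
        exact P_insert b Q hjs' fun m hm => (hlt m hm).le
      have hji : j ≤ i := le_trans (s.min'_le m₀ hm₀) him
      rcases eq_or_lt_of_le hji with heq | hlt2
      · -- i = j
        rw [hPs, ← heq, ← mul_assoc, ι_sq_scalar, ← Algebra.smul_def]
        exact Submodule.smul_mem _ _ (Submodule.subset_span ⟨s', by simp only [Set.mem_setOf_eq]; omega, rfl⟩)
      · -- j < i
        rw [hPs, ← mul_assoc, ι_mul_ι_comm, sub_mul, ← Algebra.smul_def, mul_assoc]
        refine Submodule.sub_mem _
          (Submodule.smul_mem _ _ (Submodule.subset_span ⟨s', by simp only [Set.mem_setOf_eq]; omega, rfl⟩)) ?_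
        have hz : ι Q (b i) * P b Q s' ∈ Sc b Q (s'.card + 1) := by
          refine IH (s'.card * N + i.val) ?_ i s' le_rfl
          have : s'.card * N + N ≤ s.card * N := by
            rw [← hcard]; ring_nf; omega
          omega
        rw [hcard] at hz
        have hjlt : j.val < i.val := hlt2
        -- goal : ι Q (b j) * (ι Q (b i) * P b Q s') ∈ Sc b Q (s.card + 1)
        refine Submodule.span_induction ?_ ?_ ?_ ?_ hz
        · rintro z ⟨u, hu, rfl⟩
          have hu' : u.card ≤ s.card := hu
          have hmem : ι Q (b j) * P b Q u ∈ Sc b Q (u.card + 1) := by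
            refine IH (u.card * N + j.val) ?_ j u le_rfl
            have h1 : u.card * N ≤ s.card * N := Nat.mul_le_mul_right _ hu'
            omega
          exact Sc_mono b Q (by omega : u.card + 1 ≤ s.card + 1) hmem
        · simp
        · intro z w _ _ hzm hwm
          rw [mul_add]; exact Submodule.add_mem _ hzm hwm
        · intro a z _ hzm
          rw [mul_smul_comm]; exact Submodule.smul_mem _ _ hzm

lemma Sc_le (c : ℕ) : Sc b Q c ≤ Sc b Q N :=
  Submodule.span_mono (Set.image_mono fun s _ =>
    le_trans (Finset.card_le_univ s) (by simp))

lemma P_mem (s : Finset (Fin N)) : P b Q s ∈ Sc b Q N :=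
  Submodule.subset_span ⟨s, le_trans (Finset.card_le_univ s) (by simp), rfl⟩

lemma mul_mem_S (i : Fin N) {z : CliffordAlgebra Q} (hz : z ∈ Sc b Q N) :
    ι Q (b i) * z ∈ Sc b Q N := by
  refine Submodule.span_induction ?_ ?_ ?_ ?_ hz
  · rintro w ⟨u, _, rfl⟩
    exact Sc_le b Q _ (key b Q (u.card * N + i.val) i u le_rfl)
  · simp
  · intro z w _ _ hzm hwm
    rw [mul_add]; exact Submodule.add_mem _ hzm hwm
  · intro a z _ hzm
    rw [mul_smul_comm]; exact Submodule.smul_mem _ _ hzm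

lemma ι_mul_mem (v : M) {z : CliffordAlgebra Q} (hz : z ∈ Sc b Q N) :
    ι Q v * z ∈ Sc b Q N := by
  have hv : ι Q v = ∑ i, b.repr v i • ι Q (b i) := by
    conv_lhs => rw [← b.sum_repr v]
    rw [map_sum]
    simp_rw [map_smul]
  rw [hv, Finset.sum_mul]
  refine Submodule.sum_mem _ fun i _ => ?_
  rw [smul_mul_assoc]
  exact Submodule.smul_mem _ _ (mul_mem_S b Q i hz)

lemma list_mul_mem (l : List (Fin N)) {z : CliffordAlgebra Q} (hz : z ∈ Sc b Q N) :
    (l.map fun i => ι Q (b i)).prod * z ∈ Sc b Q N := by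
  induction l with
  | nil => simpa using hz
  | cons i t ih =>
    rw [List.map_cons, List.prod_cons, mul_assoc]
    exact mul_mem_S b Q i ih

lemma mem_top (x : CliffordAlgebra Q) : x ∈ Sc b Q N := by
  induction x using CliffordAlgebra.induction with
  | algebraMap r =>
    rw [Algebra.algebraMap_eq_smul_one]
    refine Submodule.smul_mem _ _ ?_
    have h1 := P_mem b Q ∅
    rwa [P_empty] at h1
  | ι v =>
    have h1 := P_mem b Q ∅
    rw [P_empty] at h1
    have := ι_mul_mem b Q v h1
    simpa using this
  | mul a c ha hc =>
    refine Submodule.span_induction ?_ ?_ ?_ ?_ ha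
    · rintro w ⟨u, _, rfl⟩
      exact list_mul_mem b Q _ hc
    · simp
    · intro z w _ _ hzm hwm
      rw [add_mul]; exact Submodule.add_mem _ hzm hwm
    · intro r z _ hzm
      rw [smul_mul_assoc]; exact Submodule.smul_mem _ _ hzm
  | add a c ha hc => exact Submodule.add_mem _ ha hc

include b in
theorem finite : Module.Finite ℝ (CliffordAlgebra Q) := by
  classical
  rw [Module.finite_def, Submodule.fg_def]
  refine ⟨P b Q '' Set.univ, Set.Finite.image _ Set.finite_univ, ?_⟩
  rw [eq_top_iff]
  intro x _
  refine Submodule.span_mono ?_ (mem_top b Q x)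
  exact Set.image_mono fun s _ => Set.mem_univ s

end CliffordFinite


instance cliffordTopAddGroup {m : ℕ} (Q : QuadraticForm ℝ (EuclideanSpace ℝ (Fin m))) :
    IsTopologicalAddGroup (CliffordAlgebra Q) := by
  exact SeminormedAddCommGroup.toIsTopologicalAddGroup

instance cliffordContSMul {m : ℕ} (Q : QuadraticForm ℝ (EuclideanSpace ℝ (Fin m))) :
    ContinuousSMul ℝ (CliffordAlgebra Q) := by
  haveI : IsBoundedSMul ℝ (CliffordAlgebra Q) := NormedSpace.toIsBoundedSMul
  exact IsBoundedSMul.continuousSMul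

open CliffordAlgebra in
noncomputable instance cliffordFinDim {m : ℕ} (Q : QuadraticForm ℝ (EuclideanSpace ℝ (Fin m))) :
    Module.Finite ℝ (CliffordAlgebra Q) :=
  CliffordFinite.finite (EuclideanSpace.basisFun (Fin m) ℝ).toBasis Q

instance cliffordContSMulMixed {m : ℕ} (Q : QuadraticForm ℝ (EuclideanSpace ℝ (Fin m))) :
    @ContinuousSMul ℝ (CliffordAlgebra Q)
      (@SMulZeroClass.toSMul ℝ (CliffordAlgebra Q)
        (Ring.toAddCommGroup.toAddGroup.toSubNegMonoid.toAddMonoid.toAddZeroClass.toAddZero.toZero)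
        (@DistribSMul.toSMulZeroClass ℝ (CliffordAlgebra Q) _
          (@DistribMulAction.toDistribSMul ℝ (CliffordAlgebra Q) _ _
            (NormedSpace.toModule (𝕜 := ℝ) (E := CliffordAlgebra Q)).toDistribMulAction))) _ _ := by
  exact cliffordContSMul Q

/-- Left multiplication in the Clifford algebra by `ι` of a vector, as a continuous bilinear
map. -/
def mulL {m : ℕ} (Q : QuadraticForm ℝ (EuclideanSpace ℝ (Fin m))) :
    EuclideanSpace ℝ (Fin m) →L[ℝ] @ContinuousLinearMap ℝ ℝ _ _ (RingHom.id ℝ) (CliffordAlgebra Q) _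
      NormedAddCommGroup.toAddCommGroup.toAddCommMonoid (CliffordAlgebra Q) _
      NormedAddCommGroup.toAddCommGroup.toAddCommMonoid NormedSpace.toModule NormedSpace.toModule :=
  LinearMap.toContinuousLinearMap
  { toFun := fun v => (LinearMap.toContinuousLinearMap
      (LinearMap.mulLeft ℝ (CliffordAlgebra.ι Q v)) : CliffordAlgebra Q →L[ℝ] CliffordAlgebra Q)
    map_add' := fun v w => by
      ext a
      show CliffordAlgebra.ι Q (v + w) * a = CliffordAlgebra.ι Q v * a + CliffordAlgebra.ι Q w * a
      simp [add_mul]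
    map_smul' := fun c v => by
      ext a
      show CliffordAlgebra.ι Q (c • v) * a = c • (CliffordAlgebra.ι Q v * a)
      simp [smul_mul_assoc] }

@[simp] lemma mulL_apply {m : ℕ} (Q : QuadraticForm ℝ (EuclideanSpace ℝ (Fin m)))
    (v : EuclideanSpace ℝ (Fin m)) (a : CliffordAlgebra Q) :
    mulL Q v a = CliffordAlgebra.ι Q v * a := rfl

set_option maxHeartbeats 1600000 in
/-- The intertwining identity `Γω + ωΓ = nω` for the Dirac–Beltrami
operator, applied to a degree-zero homogeneous function `f` and `g = ω f`. -/
theorem gamma_omega_intertwining (n : ℕ) (hn : 1 ≤ n)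
    (Q : QuadraticForm ℝ (EuclideanSpace ℝ (Fin (n + 1))))
    (hQ : ∀ x, Q x = -‖x‖ ^ 2)
    (f : EuclideanSpace ℝ (Fin (n + 1)) → CliffordAlgebra Q)
    (hf : ContDiffOn ℝ (⊤ : ℕ∞) f {0}ᶜ)
    (hf_hom : ∀ t : ℝ, 0 < t → ∀ x : EuclideanSpace ℝ (Fin (n + 1)), x ≠ 0 →
      f (t • x) = f x)
    (g : EuclideanSpace ℝ (Fin (n + 1)) → CliffordAlgebra Q)
    (hg : ∀ y, g y = (‖y‖⁻¹ • CliffordAlgebra.ι Q y) * f y)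
    (x : EuclideanSpace ℝ (Fin (n + 1))) (hx : ‖x‖ = 1) :
    Gamma Q g x + CliffordAlgebra.ι Q x * Gamma Q f x = n • (CliffordAlgebra.ι Q x * f x) := by
  classical
  have hx0 : x ≠ 0 := fun h => by simp [h] at hx
  -- the derivative of `f` at `x`
  have hfd : DifferentiableAt ℝ f x :=
    (hf.contDiffAt (IsOpen.mem_nhds isOpen_compl_singleton hx0)).differentiableAt (by simp)
  set L := fderiv ℝ f x with hLdef
  have hL : HasFDerivAt f L x := hfd.hasFDerivAt
  -- Euler identity: the radial derivative of `f` vanishes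
  have hLx : L x = 0 := by
    have hsm : HasDerivAt (fun t : ℝ => t • x) x 1 := by
      simpa using (hasDerivAt_id (1:ℝ)).smul_const x
    have h1' : HasFDerivAt f L ((1:ℝ) • x) := by rwa [one_smul]
    have h1 : HasDerivAt (fun t : ℝ => f (t • x)) (L x) 1 :=
      h1'.comp_hasDerivAt 1 hsm
    have h2 : (fun t : ℝ => f (t • x)) =ᶠ[nhds 1] fun _ => f x := by
      filter_upwards [IsOpen.mem_nhds isOpen_Ioi (show (1:ℝ) ∈ Set.Ioi 0 by norm_num)] with t ht
      exact hf_hom t ht x hx0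
    have h3 : HasDerivAt (fun t : ℝ => f (t • x)) 0 1 :=
      (hasDerivAt_const (1:ℝ) (f x)).congr_of_eventuallyEq h2
    exact h1.unique h3
  -- derivative of the norm at `x`
  set Nd := fderiv ℝ (norm : EuclideanSpace ℝ (Fin (n+1)) → ℝ) x with hNddef
  have hN : HasFDerivAt (norm : EuclideanSpace ℝ (Fin (n+1)) → ℝ) Nd x :=
    ((contDiffAt_norm (n := 1) ℝ hx0).differentiableAt one_ne_zero).hasFDerivAt
  have hNd_eq : Nd = innerSL ℝ x := by
    have hNsq : HasFDerivAt (fun y : EuclideanSpace ℝ (Fin (n+1)) => ‖y‖ * ‖y‖)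
        (2 • innerSL ℝ x) x := by
      have := (hasStrictFDerivAt_norm_sq x).hasFDerivAt
      simpa [pow_two] using this
    have hNsq' : HasFDerivAt (fun y : EuclideanSpace ℝ (Fin (n+1)) => ‖y‖ * ‖y‖)
        (‖x‖ • Nd + ‖x‖ • Nd) x := hN.mul hN
    have h5 : Nd + Nd = 2 • innerSL ℝ x := by
      have := hNsq'.unique hNsq
      rwa [hx, one_smul] at this
    have h6 : (2:ℝ) • Nd = (2:ℝ) • innerSL ℝ x := by
      rw [two_smul, two_smul, h5, two_nsmul]
    exact smul_right_injective _ (two_ne_zero) h6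
  -- derivative of `‖·‖⁻¹` at `x`
  have hinv : HasFDerivAt (fun y : EuclideanSpace ℝ (Fin (n+1)) => ‖y‖⁻¹)
      (-(innerSL ℝ x)) x := by
    have h0 : HasDerivAt (fun t : ℝ => t⁻¹) (-1 : ℝ)
        ((norm : EuclideanSpace ℝ (Fin (n+1)) → ℝ) x) := by
      have hx1 : (norm : EuclideanSpace ℝ (Fin (n+1)) → ℝ) x = 1 := hx
      rw [hx1]
      simpa using hasDerivAt_inv (one_ne_zero (α := ℝ))
    have h := h0.comp_hasFDerivAt x hN
    rw [hNd_eq] at h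
    simpa [Function.comp_def] using h
  -- derivative of `y ↦ ‖y‖⁻¹ • y`
  have hu : HasFDerivAt (fun y : EuclideanSpace ℝ (Fin (n+1)) => ‖y‖⁻¹ • y)
      ((‖x‖⁻¹ : ℝ) • ContinuousLinearMap.id ℝ (EuclideanSpace ℝ (Fin (n+1)))
        + (-(innerSL ℝ x)).smulRight x) x := by
    exact hinv.smul (hasFDerivAt_id x)
  -- derivative of `g`
  have hgeq : g = fun y => mulL Q (‖y‖⁻¹ • y) (f y) := by
    funext y
    rw [hg y, mulL_apply, map_smul, smul_mul_assoc]
  have hc : HasFDerivAt (fun y : EuclideanSpace ℝ (Fin (n+1)) => mulL Q (‖y‖⁻¹ • y))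
      ((mulL Q).comp ((‖x‖⁻¹ : ℝ) • ContinuousLinearMap.id ℝ (EuclideanSpace ℝ (Fin (n+1)))
        + (-(innerSL ℝ x)).smulRight x)) x :=
    ((mulL Q).hasFDerivAt).comp x hu
  have hG : HasFDerivAt g
      (((mulL Q (‖x‖⁻¹ • x)).comp L)
        + ((mulL Q).comp ((‖x‖⁻¹ : ℝ) • ContinuousLinearMap.id ℝ (EuclideanSpace ℝ (Fin (n+1)))
            + (-(innerSL ℝ x)).smulRight x)).flip (f x)) x := by
    rw [hgeq]
    exact hc.clm_apply hL
  -- inner products with basis vectors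
  have hxinner : ∀ i : Fin (n+1), inner ℝ x (e i) = x i := by
    intro i
    simp [e, EuclideanSpace.inner_single_right]
  -- pointwise formula for the derivative of `g`
  have hGe : ∀ i : Fin (n+1), fderiv ℝ g x (e i) =
      CliffordAlgebra.ι Q x * L (e i)
        + (CliffordAlgebra.ι Q (e i) * f x - x i • (CliffordAlgebra.ι Q x * f x)) := by
    intro i
    erw [hG.fderiv]
    show CliffordAlgebra.ι Q (‖x‖⁻¹ • x) * L (e i)
      + CliffordAlgebra.ι Q (‖x‖⁻¹ • e i + (-(innerSL ℝ x)) (e i) • x) * f x = _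
    simp only [ContinuousLinearMap.add_apply, ContinuousLinearMap.coe_comp', Function.comp_apply,
      ContinuousLinearMap.flip_apply, ContinuousLinearMap.smul_apply,
      ContinuousLinearMap.coe_id', id_eq, ContinuousLinearMap.smulRight_apply,
      ContinuousLinearMap.neg_apply, innerSL_apply_apply, mulL_apply, hx, inv_one, one_smul,
      hxinner i, map_add, map_smul, map_neg, add_mul, smul_mul_assoc, neg_mul, neg_smul]
    abel
  -- algebraic abbreviations
  set A := CliffordAlgebra.ι Q x with hAdef
  set F := f x with hFdef
  set Df := Dirac Q f x with hDfdef
  have hxsum : ∑ i, x i • e i = x := by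
    have h := (EuclideanSpace.basisFun (Fin (n+1)) ℝ).toBasis.sum_repr x
    simpa [e, EuclideanSpace.basisFun_repr] using h
  have hA : ∑ i, x i • CliffordAlgebra.ι Q (e i) = A := by
    have h1 : ∑ i, x i • CliffordAlgebra.ι Q (e i)
        = CliffordAlgebra.ι Q (∑ i, x i • e i) := by
      rw [map_sum]
      exact Finset.sum_congr rfl fun i _ => (map_smul (CliffordAlgebra.ι Q) (x i) (e i)).symm
    rw [h1, hxsum]
  have hAA : A * A = algebraMap ℝ _ (-1) := by
    rw [hAdef, CliffordAlgebra.ι_sq_scalar, hQ, hx]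
    norm_num
  have hnorme : ∀ i : Fin (n+1), ‖e i‖ = 1 := by
    intro i
    show ‖EuclideanSpace.single i (1:ℝ)‖ = 1
    rw [EuclideanSpace.norm_single]
    norm_num
  have hQe : ∀ i : Fin (n+1), Q (e i) = -1 := by
    intro i
    rw [hQ, hnorme i]
    norm_num
  have hpolar : ∀ i : Fin (n+1), QuadraticMap.polar Q (e i) x = -(2 * x i) := by
    intro i
    have hei : inner ℝ (e i) x = x i := by
      simp [e, EuclideanSpace.inner_single_left]
    rw [QuadraticMap.polar]
    rw [hQ, hQ, hQ, norm_add_sq_real, hei, hx, hnorme i]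
    ring
  -- Euler operator on f vanishes
  have hEf : ∑ i, x i • L (e i) = 0 := by
    have h1 : ∑ i, x i • L (e i) = L (∑ i, x i • e i) := by
      rw [map_sum]
      exact Finset.sum_congr rfl fun i _ => (map_smul L (x i) (e i)).symm
    rw [h1, hxsum, hLx]
  -- the three sums making up `Dirac Q g x`
  have hS1 : ∑ i, CliffordAlgebra.ι Q (e i) * (A * L (e i)) = -(A * Df) := by
    have hterm : ∀ i : Fin (n+1), CliffordAlgebra.ι Q (e i) * (A * L (e i))
        = (-(2 * x i)) • L (e i) - A * (CliffordAlgebra.ι Q (e i) * L (e i)) := by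
      intro i
      rw [← mul_assoc, hAdef, CliffordAlgebra.ι_mul_ι_comm, hpolar i, sub_mul, ← Algebra.smul_def,
        mul_assoc]
    rw [Finset.sum_congr rfl fun i _ => hterm i, Finset.sum_sub_distrib, ← Finset.mul_sum]
    have hz : ∑ i, (-(2 * x i)) • L (e i) = 0 := by
      have : ∀ i : Fin (n+1), (-(2 * x i)) • L (e i) = (-2 : ℝ) • (x i • L (e i)) := by
        intro i
        rw [smul_smul]
        ring_nf
      rw [Finset.sum_congr rfl fun i _ => this i, ← Finset.smul_sum, hEf, smul_zero]
    rw [hz, hDfdef, Dirac, zero_sub]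
  have hS2 : ∑ i, CliffordAlgebra.ι Q (e i) * (CliffordAlgebra.ι Q (e i) * F)
      = (-(n+1) : ℝ) • F := by
    have hterm : ∀ i : Fin (n+1), CliffordAlgebra.ι Q (e i) * (CliffordAlgebra.ι Q (e i) * F)
        = (-1 : ℝ) • F := by
      intro i
      rw [← mul_assoc, CliffordAlgebra.ι_sq_scalar, hQe i, ← Algebra.smul_def]
    rw [Finset.sum_congr rfl fun i _ => hterm i, Finset.sum_const, Finset.card_univ,
      Fintype.card_fin, ← Nat.cast_smul_eq_nsmul ℝ, smul_smul]
    norm_num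
  have hS3 : ∑ i, x i • (CliffordAlgebra.ι Q (e i) * (A * F)) = -F := by
    have hterm : ∀ i : Fin (n+1), x i • (CliffordAlgebra.ι Q (e i) * (A * F))
        = (x i • CliffordAlgebra.ι Q (e i)) * (A * F) := by
      intro i
      rw [smul_mul_assoc]
    rw [Finset.sum_congr rfl fun i _ => hterm i, ← Finset.sum_mul, hA, ← mul_assoc, hAA,
      ← Algebra.smul_def]
    simp
  -- Dirac of g
  have hDg : Dirac Q g x = -(A * Df) + (-(n : ℝ)) • F := by
    rw [Dirac]
    rw [Finset.sum_congr rfl fun i _ => by rw [hGe i, mul_add, mul_sub, mul_smul_comm]]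
    rw [Finset.sum_add_distrib, Finset.sum_sub_distrib, hS1, hS2, hS3]
    have h7 : ((-(n+1) : ℝ)) • F - (-F) = (-(n : ℝ)) • F := by module
    rw [h7]
  -- Euler operator on g vanishes
  have hxx : ∑ i, x i * x i = (1 : ℝ) := by
    have h1 : inner ℝ x x = ∑ i, x i * x i := by
      rw [PiLp.inner_apply]
      simp [RCLike.inner_apply, pow_two]
    have h2 : inner ℝ x x = 1 := by
      rw [real_inner_self_eq_norm_sq, hx]
      norm_num
    rw [← h1, h2]
  have hEg : ∑ i, x i • fderiv ℝ g x (e i) = 0 := by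
    rw [Finset.sum_congr rfl fun i _ => by
      rw [hGe i, smul_add, smul_sub, smul_smul]]
    rw [Finset.sum_add_distrib, Finset.sum_sub_distrib]
    have ha : ∑ i, x i • (A * L (e i)) = 0 := by
      have : ∀ i : Fin (n+1), x i • (A * L (e i)) = A * (x i • L (e i)) := fun i =>
        (mul_smul_comm _ _ _).symm
      rw [Finset.sum_congr rfl fun i _ => this i, ← Finset.mul_sum, hEf, mul_zero]
    have hb : ∑ i, x i • (CliffordAlgebra.ι Q (e i) * F) = A * F := by
      have : ∀ i : Fin (n+1), x i • (CliffordAlgebra.ι Q (e i) * F)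
          = (x i • CliffordAlgebra.ι Q (e i)) * F := fun i => (smul_mul_assoc _ _ _).symm
      rw [Finset.sum_congr rfl fun i _ => this i, ← Finset.sum_mul, hA]
    have hcc : ∑ i, (x i * x i) • (A * F) = A * F := by
      rw [← Finset.sum_smul, hxx, one_smul]
    rw [ha, hb, hcc]
    abel
  -- final assembly
  have hGamg : Gamma Q g x = -(A * Dirac Q g x) := by
    rw [Gamma, hEg, sub_zero]
  have hGamf : Gamma Q f x = -(A * Df) := by
    rw [Gamma, hDfdef]
    have : ∑ i, x i • fderiv ℝ f x (e i) = 0 := hEf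
    rw [this, sub_zero]
  have hADf : A * (A * Df) = -Df := by
    rw [← mul_assoc, hAA, ← Algebra.smul_def]
    simp
  have hADF2 : A * (A * F) = -F := by
    rw [← mul_assoc, hAA, ← Algebra.smul_def]
    simp
  rw [hGamg, hGamf, hDg]
  have e1 : A * (-(A * Df) + (-(n:ℝ)) • F) = Df + (-(n:ℝ)) • (A * F) := by
    rw [mul_add, mul_neg, hADf, mul_smul_comm, neg_neg]
  have e2 : A * -(A * Df) = Df := by rw [mul_neg, hADf, neg_neg]
  rw [e1, e2]
  rw [← Nat.cast_smul_eq_nsmul ℝ n (A * F)]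
  module
end
end

section
/- Let n ≥ 1 and work on EuclideanSpace ℝ (Fin (n+1)) with quadratic form Q x = -‖x‖², Clifford algebra Cl = CliffordAlgebra Q and embedding ι. Let m ∈ ℕ and let p : EuclideanSpace ℝ (Fin (n+1)) → Cl be a smooth left monogenic function (∑_i ι(e_i) * (∂_i p)(x) = 0 for all x) that is homogeneous of degree m (p(t x) = t^m p(x) for t > 0). Then p, restricted to the unit sphere, is an eigenvector of the conformal Dirac operator D_s = ω(Γ_ω − n/2) with eigenvalue −(m + n/2): for every ω with ‖ω‖ = 1, ι(ω) * ((Γ p)(ω) − (n/2) • p(ω)) = −(m + n/2) • (ι(ω) * p(ω)). -/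
open Function
open scoped ENNReal

noncomputable section

/-- A left monogenic function homogeneous of degree `m`, restricted to the
unit sphere, is an eigenvector of the conformal Dirac operator
`D_s = ω (Γ_ω - n/2)` with eigenvalue `-(m + n/2)`. -/
theorem conformal_dirac_eigenvalue_Pm (n : ℕ) (hn : 1 ≤ n)
    (Q : QuadraticForm ℝ (EuclideanSpace ℝ (Fin (n + 1))))
    (hQ : ∀ x, Q x = -‖x‖ ^ 2)
    (m : ℕ)
    (p : EuclideanSpace ℝ (Fin (n + 1)) → CliffordAlgebra Q)
    (hp : ContDiff ℝ (⊤ : ℕ∞) p)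
    (hp_mono : ∀ x, ∑ i, CliffordAlgebra.ι Q (e i) * fderiv ℝ p x (e i) = 0)
    (hp_hom : ∀ t : ℝ, 0 < t → ∀ x, p (t • x) = t ^ m • p x)
    (ω : EuclideanSpace ℝ (Fin (n + 1))) (hω : ‖ω‖ = 1) :
    CliffordAlgebra.ι Q ω * (Gamma Q p ω - ((n : ℝ) / 2) • p ω) =
      (-((m : ℝ) + n / 2)) • (CliffordAlgebra.ι Q ω * p ω) := by
  classical
  haveI : ContinuousSMul ℝ (CliffordAlgebra Q) := NormedSpace.toIsBoundedSMul.continuousSMul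
  haveI := @IsScalarTower.left ℝ (CliffordAlgebra Q) _ (NormedSpace.toModule (𝕜 := ℝ) (E := CliffordAlgebra Q)).toMulAction
  have hdiff : Differentiable ℝ p := hp.differentiable (by simp)
  -- Euler identity: fderiv ℝ p ω ω = m • p ω
  have euler : fderiv ℝ p ω ω = (m : ℝ) • p ω := by
    have h1 : HasDerivAt (fun t : ℝ => t • ω) ω 1 := by
      simpa using (hasDerivAt_id (1 : ℝ)).smul_const ω
    have h2 : HasDerivAt (fun t : ℝ => p (t • ω)) (fderiv ℝ p ω ω) 1 := by
      have := ((hdiff ((1:ℝ) • ω)).hasFDerivAt.comp_hasDerivAt 1 h1)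
      simp only [one_smul] at this
      exact this
    have h3 : HasDerivAt (fun t : ℝ => t ^ m • p ω) ((m : ℝ) • p ω) 1 := by
      have := (hasDerivAt_pow m (1 : ℝ)).smul_const (p ω)
      simp at this
      exact this
    have heq : (fun t : ℝ => p (t • ω)) =ᶠ[nhds (1:ℝ)] (fun t : ℝ => t ^ m • p ω) := by
      filter_upwards [eventually_gt_nhds (by norm_num : (0:ℝ) < 1)] with t ht
      exact hp_hom t ht ω
    have h4 : HasDerivAt (fun t : ℝ => p (t • ω)) ((m : ℝ) • p ω) 1 :=
      h3.congr_of_eventuallyEq heq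
    exact h2.unique h4
  have hsum : ∑ i, ω i • fderiv ℝ p ω (e i) = fderiv ℝ p ω ω := by
    have hx : ∑ i, ω i • e i = ω := by
      have h := (EuclideanSpace.basisFun (Fin (n+1)) ℝ).sum_repr ω
      simpa [e, EuclideanSpace.basisFun_apply, EuclideanSpace.basisFun_repr] using h
    calc ∑ i, ω i • fderiv ℝ p ω (e i)
        = fderiv ℝ p ω (∑ i, ω i • e i) := by
          rw [map_sum]
          simp
      _ = fderiv ℝ p ω ω := by rw [hx]
  have hG : Gamma Q p ω = -((m : ℝ) • p ω) := by
    unfold Gamma Dirac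
    rw [hp_mono ω, hsum, euler]
    simp
  rw [hG]
  rw [sub_eq_add_neg, ← neg_add, ← add_smul, ← neg_smul, mul_smul_comm]
end
end

section
/- Let n ≥ 1 and work on EuclideanSpace ℝ (Fin (n+1)) with quadratic form Q x = -‖x‖², Clifford algebra Cl = CliffordAlgebra Q and embedding ι. Let m ∈ ℕ and let q : EuclideanSpace ℝ (Fin (n+1)) \ {0} → Cl be a smooth left monogenic function (∑_i ι(e_i) * (∂_i q)(x) = 0 for all x ≠ 0) that is homogeneous of degree −(n+m) (q(t x) = t^{−(n+m)} q(x) for t > 0). Then q, restricted to the unit sphere, is an eigenvector of the conformal Dirac operator D_s = ω(Γ_ω − n/2) with eigenvalue +(m + n/2): for every ω with ‖ω‖ = 1, ι(ω) * ((Γ q)(ω) − (n/2) • q(ω)) = (m + n/2) • (ι(ω) * q(ω)). -/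
open Function
open scoped ENNReal

noncomputable section

/-- A left monogenic function homogeneous of degree `-(n+m)`, restricted to
the unit sphere, is an eigenvector of the conformal Dirac operator
`D_s = ω (Γ_ω - n/2)` with eigenvalue `m + n/2`. -/
theorem conformal_dirac_eigenvalue_Qm (n : ℕ) (hn : 1 ≤ n)
    (Q : QuadraticForm ℝ (EuclideanSpace ℝ (Fin (n + 1))))
    (hQ : ∀ x, Q x = -‖x‖ ^ 2)
    (m : ℕ)
    (q : EuclideanSpace ℝ (Fin (n + 1)) → CliffordAlgebra Q)
    (hq : ContDiffOn ℝ (⊤ : ℕ∞) q {0}ᶜ)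
    (hq_mono : ∀ x : EuclideanSpace ℝ (Fin (n + 1)), x ≠ 0 →
      ∑ i, CliffordAlgebra.ι Q (e i) * fderiv ℝ q x (e i) = 0)
    (hq_hom : ∀ t : ℝ, 0 < t → ∀ x : EuclideanSpace ℝ (Fin (n + 1)), x ≠ 0 →
      q (t • x) = (t ^ (n + m))⁻¹ • q x)
    (ω : EuclideanSpace ℝ (Fin (n + 1))) (hω : ‖ω‖ = 1) :
    CliffordAlgebra.ι Q ω * (Gamma Q q ω - ((n : ℝ) / 2) • q ω) =
      (((m : ℝ) + n / 2)) • (CliffordAlgebra.ι Q ω * q ω) := by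

  have hω0 : ω ≠ 0 := by
    intro h; rw [h, norm_zero] at hω; norm_num at hω
  have hmem : {(0 : EuclideanSpace ℝ (Fin (n + 1)))}ᶜ ∈ nhds ω :=
    isOpen_compl_singleton.mem_nhds hω0
  have hdiff : DifferentiableAt ℝ q ω :=
    ((hq.contDiffAt hmem).differentiableAt (by simp))
  haveI : IsBoundedSMul ℝ (CliffordAlgebra Q) := NormedSpace.toIsBoundedSMul
  haveI : ContinuousSMul ℝ (CliffordAlgebra Q) := IsBoundedSMul.continuousSMul
  -- Euler identity: fderiv ℝ q ω ω = -(n+m) • q ω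
  have hder1 : HasDerivAt (fun t : ℝ => q (t • ω)) (fderiv ℝ q ω ω) 1 := by
    have h1 : HasDerivAt (fun t : ℝ => t • ω) ω 1 := by
      simpa using (hasDerivAt_id (1 : ℝ)).smul_const ω
    have h2 : HasFDerivAt q (fderiv ℝ q ω) ((1 : ℝ) • ω) := by
      rw [one_smul]; exact hdiff.hasFDerivAt
    exact h2.comp_hasDerivAt 1 h1
  have hder2 : HasDerivAt (fun t : ℝ => (t ^ (n + m))⁻¹ • q ω)
      ((-((n : ℝ) + m)) • q ω) 1 := by
    have hz := hasDerivAt_zpow (-((n + m : ℕ) : ℤ)) (1 : ℝ) (Or.inl one_ne_zero)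
    have := (letI M : Module ℝ (CliffordAlgebra Q) := NormedSpace.toModule
      haveI : IsScalarTower ℝ ℝ (CliffordAlgebra Q) := IsScalarTower.left ℝ
      hz.smul_const (q ω))
    have heq : (fun t : ℝ => t ^ (-((n + m : ℕ) : ℤ)) • q ω)
        = fun t : ℝ => (t ^ (n + m))⁻¹ • q ω := by
      funext t
      rw [zpow_neg, zpow_natCast]
    rw [← heq]
    have hc : (-((n : ℝ) + m)) = ((-((n + m : ℕ) : ℤ) : ℤ) : ℝ) * (1:ℝ) ^ (-((n + m : ℕ) : ℤ) - 1) := by push_cast; simp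
    rw [hc]
    exact this
  have heq : (fun t : ℝ => q (t • ω)) =ᶠ[nhds 1]
      (fun t : ℝ => (t ^ (n + m))⁻¹ • q ω) := by
    filter_upwards [Ioi_mem_nhds (show (0:ℝ) < 1 by norm_num)] with t ht
    exact hq_hom t ht ω hω0
  have hder1' : HasDerivAt (fun t : ℝ => (t ^ (n + m))⁻¹ • q ω) (fderiv ℝ q ω ω) 1 :=
    hder1.congr_of_eventuallyEq heq.symm
  have hEuler : fderiv ℝ q ω ω = (-((n : ℝ) + m)) • q ω := hder1'.unique hder2
  -- decompose ω in the standard basis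
  have hsum : ∑ i, ω i • e i = ω := by
    ext j
    have h' : (∑ i, ω i • e i) j = ∑ i, (ω i • e i) j :=
      by simp [WithLp.ofLp_sum]
    rw [h']
    simp [e, EuclideanSpace.single_apply]
  have hE : ∑ i, ω i • fderiv ℝ q ω (e i) = (-((n : ℝ) + m)) • q ω := by
    have h' : fderiv ℝ q ω ω = fderiv ℝ q ω (∑ i, ω i • e i) := by rw [hsum]
    rw [← hEuler, h', map_sum]
    simp
  have hD : Dirac Q q ω = 0 := hq_mono ω hω0
  have hG : Gamma Q q ω = ((n : ℝ) + m) • q ω := by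
    rw [Gamma, hD, hE, mul_zero, neg_zero, zero_sub, neg_smul, neg_neg]
  rw [hG, ← sub_smul, mul_smul_comm]
  congr 1
  ring
end
end

section
/- Let n ≥ 1 and work on EuclideanSpace ℝ (Fin (n+1)) with quadratic form Q x = -‖x‖², Clifford algebra Cl = CliffordAlgebra Q and embedding ι. Let m ∈ ℕ and let p : EuclideanSpace ℝ (Fin (n+1)) → Cl be a smooth left monogenic function homogeneous of degree m. Then the function q(x) := ‖x‖^{-(2m+n+1)} • (ι(x) * p(x)) is left monogenic on EuclideanSpace ℝ (Fin (n+1)) \ {0} and homogeneous of degree −(n+m). (In particular, on the unit sphere ω · p_m(ω) lies in Q_m whenever p_m ∈ P_m.) -/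
open Function
open scoped ENNReal

noncomputable section

open CliffordAlgebra

section Finiteness
variable {N : ℕ} {M : Type*} [AddCommGroup M] [Module ℝ M]
  (Q : QuadraticForm ℝ M) (v : Fin N → M)

/-- ordered monomial in the generators -/
noncomputable def cliffMon (s : Finset (Fin N)) : CliffordAlgebra Q :=
  ((s.sort (· ≤ ·)).map fun i => ι Q (v i)).prod

lemma cliffMon_empty : cliffMon Q v ∅ = 1 := by simp [cliffMon]

lemma cliffMon_cons {j : Fin N} {u : Finset (Fin N)} (h : ∀ a ∈ u, j < a) :
    ι Q (v j) * cliffMon Q v u = cliffMon Q v (insert j u) := by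
  have hj : j ∉ u := fun hju => lt_irrefl j (h j hju)
  rw [cliffMon, cliffMon, Finset.sort_insert (· ≤ ·) (fun b hb => (h b hb).le) hj,
    List.map_cons, List.prod_cons]

lemma cliffMon_singleton (i : Fin N) : ι Q (v i) = cliffMon Q v {i} := by
  simp [cliffMon]

lemma ι_mul_cliffMon_mem : ∀ (k : ℕ) (s : Finset (Fin N)), s.card = k → ∀ i,
    ι Q (v i) * cliffMon Q v s ∈
      Submodule.span ℝ (cliffMon Q v '' {u | u ⊆ insert i s}) := by
  intro k
  induction k with
  | zero =>
    intro s hs i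
    rw [Finset.card_eq_zero] at hs; subst hs
    rw [cliffMon_empty, mul_one, cliffMon_singleton Q v i]
    exact Submodule.subset_span ⟨{i}, by simp, rfl⟩
  | succ k ih =>
    intro s hs i
    have hne : s.Nonempty := Finset.card_pos.mp (by omega)
    set j := s.min' hne with hj
    have hjs : j ∈ s := s.min'_mem hne
    set s' := s.erase j with hs'
    have hcard' : s'.card = k := by rw [hs', Finset.card_erase_of_mem hjs, hs]; rfl
    have hmin : ∀ a ∈ s', j < a := fun a ha =>
      lt_of_le_of_ne (s.min'_le a (Finset.mem_of_mem_erase ha))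
        (Ne.symm (Finset.ne_of_mem_erase ha))
    have hsplit : cliffMon Q v s = ι Q (v j) * cliffMon Q v s' := by
      rw [cliffMon_cons Q v hmin, Finset.insert_erase hjs]
    have hs'sub : s' ⊆ s := Finset.erase_subset _ _
    rcases lt_trichotomy i j with hij | rfl | hij
    · have hlt : ∀ a ∈ s, i < a := fun a ha => lt_of_lt_of_le hij (s.min'_le a ha)
      rw [cliffMon_cons Q v hlt]
      exact Submodule.subset_span ⟨insert i s, Finset.Subset.refl _, rfl⟩
    · rw [hsplit, ← mul_assoc, ι_sq_scalar, ← Algebra.smul_def]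
      exact Submodule.smul_mem _ _ (Submodule.subset_span
        ⟨s', fun a ha => Finset.mem_insert_of_mem (hs'sub ha), rfl⟩)
    · rw [hsplit, ← mul_assoc, ι_mul_ι_comm, sub_mul, mul_assoc]
      apply Submodule.sub_mem
      · rw [← Algebra.smul_def]
        exact Submodule.smul_mem _ _ (Submodule.subset_span
          ⟨s', fun a ha => Finset.mem_insert_of_mem (hs'sub ha), rfl⟩)
      · have hIH := ih s' hcard' i
        have hmap := Submodule.mem_map_of_mem (f := LinearMap.mulLeft ℝ (ι Q (v j))) hIH
        rw [Submodule.map_span, ← Set.image_comp] at hmap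
        refine Submodule.span_le.mpr ?_ hmap
        rintro - ⟨u, hu, rfl⟩
        have hju : ∀ a ∈ u, j < a := by
          intro a ha
          rcases Finset.mem_insert.mp (hu ha) with rfl | ha'
          · exact hij
          · exact hmin a ha'
        have : (LinearMap.mulLeft ℝ (ι Q (v j)) ∘ cliffMon Q v) u
            = cliffMon Q v (insert j u) := cliffMon_cons Q v hju
        rw [this]
        refine Submodule.subset_span ⟨insert j u, ?_, rfl⟩
        intro a ha
        rcases Finset.mem_insert.mp ha with rfl | ha'
        · exact Finset.mem_insert_of_mem hjs
        · rcases Finset.mem_insert.mp (hu ha') with rfl | h''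
          · exact Finset.mem_insert_self _ _
          · exact Finset.mem_insert_of_mem (hs'sub h'')

lemma mul_mem_spanMon (hv : ⊤ ≤ Submodule.span ℝ (Set.range v)) :
    ∀ a t : CliffordAlgebra Q, t ∈ Submodule.span ℝ (Set.range (cliffMon Q v)) →
      a * t ∈ Submodule.span ℝ (Set.range (cliffMon Q v)) := by
  set T := Submodule.span ℝ (Set.range (cliffMon Q v)) with hT
  -- step 1: generators
  have step1 : ∀ i t, t ∈ T → ι Q (v i) * t ∈ T := by
    intro i t ht
    have hmap := Submodule.mem_map_of_mem (f := LinearMap.mulLeft ℝ (ι Q (v i))) ht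
    rw [hT, Submodule.map_span, ← Set.range_comp] at hmap
    refine Submodule.span_le.mpr ?_ hmap
    rintro - ⟨u, rfl⟩
    have := ι_mul_cliffMon_mem Q v u.card u rfl i
    exact Submodule.span_mono (by rintro - ⟨w, -, rfl⟩; exact ⟨w, rfl⟩) this
  -- step 2: arbitrary vectors
  have step2 : ∀ x : M, ∀ t ∈ T, ι Q x * t ∈ T := by
    intro x
    have hx : x ∈ Submodule.span ℝ (Set.range v) := hv Submodule.mem_top
    induction hx using Submodule.span_induction with
    | mem y hy => rcases hy with ⟨i, rfl⟩; exact step1 i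
    | zero => intro t ht; simp only [map_zero, zero_mul]; exact T.zero_mem
    | add y z _ _ hy hz =>
      intro t ht
      rw [map_add, add_mul]
      exact T.add_mem (hy t ht) (hz t ht)
    | smul c y _ hy =>
      intro t ht
      rw [map_smul, smul_mul_assoc]
      exact T.smul_mem c (hy t ht)
  -- step 3: all elements
  intro a
  induction a using CliffordAlgebra.induction with
  | algebraMap r =>
    intro t ht
    rw [← Algebra.smul_def]
    exact T.smul_mem r ht
  | ι x => exact step2 x
  | mul a b ha hb =>
    intro t ht
    rw [mul_assoc]
    exact ha _ (hb t ht)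
  | add a b ha hb =>
    intro t ht
    rw [add_mul]
    exact T.add_mem (ha t ht) (hb t ht)

theorem cliffordFinite (hv : ⊤ ≤ Submodule.span ℝ (Set.range v)) :
    Module.Finite ℝ (CliffordAlgebra Q) := by
  have htop : Submodule.span ℝ (Set.range (cliffMon Q v)) = ⊤ := by
    rw [eq_top_iff]
    intro a _
    have h1 : (1 : CliffordAlgebra Q) ∈ Submodule.span ℝ (Set.range (cliffMon Q v)) := by
      rw [← cliffMon_empty Q v]
      exact Submodule.subset_span (Set.mem_range_self _)
    have := mul_mem_spanMon Q v hv a 1 h1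
    rwa [mul_one] at this
  exact ⟨⟨(Set.finite_range (cliffMon Q v)).toFinset, by
    rw [Set.Finite.coe_toFinset]; exact htop⟩⟩


open CliffordAlgebra

instance cliffFinite {k : ℕ} (Q : QuadraticForm ℝ (EuclideanSpace ℝ (Fin k))) :
    Module.Finite ℝ (CliffordAlgebra Q) := by
  apply cliffordFinite Q (fun i => EuclideanSpace.single i (1:ℝ))
  rw [← (EuclideanSpace.basisFun (Fin k) ℝ).toBasis.span_eq]
  apply Submodule.span_mono
  rintro - ⟨i, rfl⟩
  exact ⟨i, by simp⟩

section RedSec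

instance cliffTopAddGroup {k : ℕ} (Q : QuadraticForm ℝ (EuclideanSpace ℝ (Fin k))) :
    @IsTopologicalAddGroup (CliffordAlgebra Q) _ (CliffordAlgebra.instRing Q).toAddCommGroup.toAddGroup := by
  have : @IsTopologicalAddGroup (CliffordAlgebra Q) _
    (Module.toNormedAddCommGroup (CliffordAlgebra Q)).toAddCommGroup.toAddGroup := inferInstance
  exact this

instance cliffContAdd {k : ℕ} (Q : QuadraticForm ℝ (EuclideanSpace ℝ (Fin k))) :
    @ContinuousAdd (CliffordAlgebra Q) _ (AddSemigroup.toAdd (self := (Semiring.toAddCommMonoid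
      (self := Ring.toSemiring (self := CliffordAlgebra.instRing Q))).toAddMonoid.toAddSemigroup)) := by
  have : @ContinuousAdd (CliffordAlgebra Q) _
    (Module.toNormedAddCommGroup (CliffordAlgebra Q)).toAddCommGroup.toAddGroup.toAddMonoid.toAddSemigroup.toAdd := inferInstance
  exact this

instance cliffContSMul {k : ℕ} (Q : QuadraticForm ℝ (EuclideanSpace ℝ (Fin k))) :
    @ContinuousSMul ℝ (CliffordAlgebra Q) (Algebra.toSMul) _ _ := by
  have : @ContinuousSMul ℝ (CliffordAlgebra Q) (Module.toNormedSpace (CliffordAlgebra Q)).toModule.toDistribMulAction.toMulAction.toSMul _ _ :=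
    @IsBoundedSMul.continuousSMul ℝ (CliffordAlgebra Q) _ _ _ _ _ (Module.toNormedSpace (CliffordAlgebra Q)).toIsBoundedSMul
  exact this

instance cliffScalarTower {k : ℕ} (Q : QuadraticForm ℝ (EuclideanSpace ℝ (Fin k))) :
    @IsScalarTower ℝ ℝ (CliffordAlgebra Q) _
      (Module.toNormedSpace (CliffordAlgebra Q)).toModule.toDistribMulAction.toMulAction.toSMul
      Algebra.toSMul :=
  ⟨fun a b c => by exact mul_smul a b c⟩

section Calculus
variable {k : ℕ} (Q : QuadraticForm ℝ (EuclideanSpace ℝ (Fin k)))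

/-- multiplication as continuous bilinear map -/
def mulCLM : CliffordAlgebra Q →L[ℝ] CliffordAlgebra Q →L[ℝ] CliffordAlgebra Q :=
  LinearMap.toContinuousLinearMap
    { toFun := fun a => LinearMap.toContinuousLinearMap (LinearMap.mulLeft ℝ a)
      map_add' := fun a b => by ext c; simp [add_mul]
      map_smul' := fun r a => by ext c; simp [smul_mul_assoc] }

@[simp] lemma mulCLM_apply (a b : CliffordAlgebra Q) : mulCLM Q a b = a * b := rfl

/-- right multiplication as continuous bilinear map -/
def mulCLMr : CliffordAlgebra Q →L[ℝ] CliffordAlgebra Q →L[ℝ] CliffordAlgebra Q :=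
  LinearMap.toContinuousLinearMap
    { toFun := fun b => LinearMap.toContinuousLinearMap (LinearMap.mulRight ℝ b)
      map_add' := fun a b => by ext c; simp [mul_add]
      map_smul' := fun r a => by ext c; simp }

@[simp] lemma mulCLMr_apply (a b : CliffordAlgebra Q) : mulCLMr Q b a = a * b := rfl

/-- the embedding as continuous linear map -/
def ιCLM : EuclideanSpace ℝ (Fin k) →L[ℝ] CliffordAlgebra Q :=
  LinearMap.toContinuousLinearMap (ι Q)

variable {E : Type*} [NormedAddCommGroup E] [NormedSpace ℝ E] {f g : E → CliffordAlgebra Q}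
  {f' g' : E →L[ℝ] CliffordAlgebra Q} {x : E}

lemma HasFDerivAt.clmul (hf : HasFDerivAt f f' x) (hg : HasFDerivAt g g' x) :
    HasFDerivAt (fun y => f y * g y)
      (((mulCLM Q (f x)).comp g') + ((mulCLMr Q (g x)).comp f')) x := by
  have h := ((mulCLM Q).isBoundedBilinearMap.hasFDerivAt (f x, g x)).comp x (hf.prodMk hg)
  exact h


end Calculus


section NormDeriv
variable {F : Type*} [NormedAddCommGroup F] [InnerProductSpace ℝ F]

lemma hasFDerivAt_norm_of_ne {x : F} (hx : x ≠ 0) :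
    HasFDerivAt (fun y : F => ‖y‖) (‖x‖⁻¹ • (innerSL ℝ x)) x := by
  have h1 : HasFDerivAt (fun y : F => (inner ℝ y y : ℝ))
      ((fderivInnerCLM ℝ (x, x)).comp ((ContinuousLinearMap.id ℝ F).prod
        (ContinuousLinearMap.id ℝ F))) x :=
    (hasFDerivAt_id x).inner ℝ (hasFDerivAt_id x)
  have hinner : (inner ℝ x x : ℝ) ≠ 0 := fun h => hx (inner_self_eq_zero.mp h)
  have h2 : HasDerivAt Real.sqrt (1 / (2 * Real.sqrt (inner ℝ x x : ℝ))) (inner ℝ x x : ℝ) :=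
    Real.hasDerivAt_sqrt hinner
  have h3 := h2.comp_hasFDerivAt (f := fun y : F => (inner ℝ y y : ℝ)) x h1
  have hfun : (fun y : F => Real.sqrt (inner ℝ y y : ℝ)) = fun y : F => ‖y‖ := by
    funext y
    rw [real_inner_self_eq_norm_mul_norm, Real.sqrt_mul_self (norm_nonneg y)]
  rw [show (Real.sqrt ∘ fun y : F => (inner ℝ y y : ℝ)) = fun y : F => ‖y‖ from hfun] at h3
  refine HasFDerivAt.congr_fderiv h3 ?_
  ext v
  have : Real.sqrt (inner ℝ x x : ℝ) = ‖x‖ := by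
    rw [real_inner_self_eq_norm_mul_norm, Real.sqrt_mul_self (norm_nonneg x)]
  simp [this, fderivInnerCLM_apply, real_inner_comm x v]
  ring

lemma hasFDerivAt_norm_zpow {x : F} (hx : x ≠ 0) (z : ℤ) :
    HasFDerivAt (fun y : F => ‖y‖ ^ z)
      (((z : ℝ) * ‖x‖ ^ (z - 1) * ‖x‖⁻¹) • innerSL ℝ x) x := by
  have h := (hasDerivAt_zpow z ‖x‖ (Or.inl (norm_ne_zero_iff.mpr hx))).comp_hasFDerivAt x
    (hasFDerivAt_norm_of_ne hx)
  refine HasFDerivAt.congr_fderiv h ?_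
  ext v
  simp
  ring

end NormDeriv

section Euler
variable {V W : Type*} [NormedAddCommGroup V] [NormedSpace ℝ V]
  [NormedAddCommGroup W] [NormedSpace ℝ W]

lemma euler_identity {p : V → W} (hp : ContDiff ℝ (⊤ : ℕ∞) p) {m : ℕ}
    (hhom : ∀ t : ℝ, 0 < t → ∀ x, p (t • x) = t ^ m • p x) (x : V) :
    fderiv ℝ p x x = (m : ℝ) • p x := by
  have hd : HasDerivAt (fun t : ℝ => p (t • x)) (fderiv ℝ p x x) 1 := by
    have h1 : HasDerivAt (fun t : ℝ => t • x) x 1 := by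
      simpa using (hasDerivAt_id (1 : ℝ)).smul_const x
    have h2 : HasFDerivAt p (fderiv ℝ p ((1 : ℝ) • x)) ((1 : ℝ) • x) :=
      (hp.differentiable (by simp) ((1 : ℝ) • x)).hasFDerivAt
    simpa [Function.comp_def] using h2.comp_hasDerivAt 1 h1
  have hd2 : HasDerivAt (fun t : ℝ => p (t • x)) ((m : ℝ) • p x) 1 := by
    have h : HasDerivAt (fun t : ℝ => t ^ m • p x) ((m : ℝ) • p x) 1 := by
      simpa using (hasDerivAt_pow m (1 : ℝ)).smul_const (p x)
    apply h.congr_of_eventuallyEq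
    filter_upwards [eventually_gt_nhds one_pos] with t ht
    exact hhom t ht x
  exact hd.unique hd2

end Euler

end RedSec

/-- If `p` is left monogenic and homogeneous of degree `m`, then
`q x = ‖x‖^{-(2m+n+1)} • (ι x * p x)` is left monogenic away from the origin and
homogeneous of degree `-(n+m)` (so on the sphere `ω ↦ ι ω * p ω` lies in `Q_m`). -/
theorem inversion_Pm_to_Qm (n : ℕ) (hn : 1 ≤ n)
    (Q : QuadraticForm ℝ (EuclideanSpace ℝ (Fin (n + 1))))
    (hQ : ∀ x, Q x = -‖x‖ ^ 2)
    (m : ℕ)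
    (p : EuclideanSpace ℝ (Fin (n + 1)) → CliffordAlgebra Q)
    (hp : ContDiff ℝ (⊤ : ℕ∞) p)
    (hp_mono : ∀ x, ∑ i, CliffordAlgebra.ι Q (e i) * fderiv ℝ p x (e i) = 0)
    (hp_hom : ∀ t : ℝ, 0 < t → ∀ x, p (t • x) = t ^ m • p x)
    (q : EuclideanSpace ℝ (Fin (n + 1)) → CliffordAlgebra Q)
    (hq : ∀ x, q x = (‖x‖ ^ (2 * m + n + 1))⁻¹ • (CliffordAlgebra.ι Q x * p x)) :
    (∀ x : EuclideanSpace ℝ (Fin (n + 1)), x ≠ 0 →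
      ∑ i, CliffordAlgebra.ι Q (e i) * fderiv ℝ q x (e i) = 0) ∧
    (∀ t : ℝ, 0 < t → ∀ x : EuclideanSpace ℝ (Fin (n + 1)), x ≠ 0 →
      q (t • x) = (t ^ (n + m))⁻¹ • q x) := by
  constructor
  · intro x hx
    have hxne : ‖x‖ ≠ 0 := norm_ne_zero_iff.mpr hx
    set N : ℕ := 2 * m + n + 1 with hN
    have hqfun : q = fun y => (‖y‖ ^ (-(N : ℤ))) • (CliffordAlgebra.ι Q y * p y) := by
      funext y
      rw [hq, zpow_neg, zpow_natCast]
    set ιL : EuclideanSpace ℝ (Fin (n + 1)) →L[ℝ] CliffordAlgebra Q :=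
      ιCLM Q with hιL
    have hι : HasFDerivAt (fun y => CliffordAlgebra.ι Q y) ιL x := ιL.hasFDerivAt
    have hpd : HasFDerivAt p (fderiv ℝ p x) x := (hp.differentiable (by simp) x).hasFDerivAt
    have hA := HasFDerivAt.clmul Q hι hpd
    have hc := hasFDerivAt_norm_zpow hx (-(N : ℤ))
    have hqd := @HasFDerivAt.smul _ _ _ _ _ _ _ _ _ _ _ _ _ _ _ _
      ⟨fun a b c => by exact mul_smul a b c⟩ _ _ hc hA
    change HasFDerivAt (fun y => ‖y‖ ^ (-(N : ℤ)) • (CliffordAlgebra.ι Q y * p y)) _ x at hqd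
    rw [← hqfun] at hqd
    have hfd := @HasFDerivAt.fderiv _ _ _ _ _ _ _ _ _ _ _ _ _ _ _ _
      ⟨by exact (continuous_smul : Continuous fun p : ℝ × CliffordAlgebra Q => p.1 • p.2)⟩ _ hqd
    set c₀ : ℝ := ‖x‖ ^ (-(N : ℤ)) with hc₀
    set γ : ℝ := ((Int.cast (-(N : ℤ)) : ℝ)) * ‖x‖ ^ ((-(N : ℤ)) - 1) * ‖x‖⁻¹ with hγ
    have happ : ∀ i, fderiv ℝ q x (e i) =
        c₀ • (CliffordAlgebra.ι Q x * fderiv ℝ p x (e i))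
          + c₀ • (CliffordAlgebra.ι Q (e i) * p x)
          + (γ * x i) • (CliffordAlgebra.ι Q x * p x) := by
      intro i
      erw [hfd]
      change c₀ • (CliffordAlgebra.ι Q x * fderiv ℝ p x (e i) + CliffordAlgebra.ι Q (e i) * p x)
        + (γ * (inner ℝ x (e i) : ℝ)) • (CliffordAlgebra.ι Q x * p x) = _
      have hxi : (inner ℝ x (e i) : ℝ) = x i := by
        rw [e, EuclideanSpace.inner_single_right]; simp
      rw [smul_add]
      congr 1
      congr 1
      simp only [smul_eq_mul, hxi]
    -- basic facts
    have hdecomp : ∑ i, x i • e i = x := by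
      simpa [e] using (EuclideanSpace.basisFun (Fin (n + 1)) ℝ).sum_repr x
    have hιx : ∑ i, x i • CliffordAlgebra.ι Q (e i) = CliffordAlgebra.ι Q x := by
      have h1 : ∑ i, x i • CliffordAlgebra.ι Q (e i)
          = CliffordAlgebra.ι Q (∑ i, x i • e i) := by
        rw [map_sum]
        exact Finset.sum_congr rfl fun i _ => (map_smul _ _ _).symm
      rw [h1, hdecomp]
    have hQe : ∀ i, Q (e i) = -1 := by
      intro i
      rw [hQ, e, EuclideanSpace.norm_single]
      norm_num
    have hQx : Q x = -‖x‖ ^ 2 := hQ x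
    have hpolar : ∀ i, QuadraticMap.polar Q (e i) x = -2 * x i := by
      intro i
      show Q (e i + x) - Q (e i) - Q x = _
      rw [hQ, hQ, hQ, norm_add_sq_real, e, EuclideanSpace.norm_single,
        EuclideanSpace.inner_single_left]
      simp
      ring
    have hfx : ∑ i, x i • fderiv ℝ p x (e i) = (m : ℝ) • p x := by
      have h1 : ∑ i, x i • fderiv ℝ p x (e i) = fderiv ℝ p x (∑ i, x i • e i) := by
        rw [map_sum]
        exact Finset.sum_congr rfl fun i _ => (map_smul _ _ _).symm
      rw [h1, hdecomp]
      exact euler_identity hp hp_hom x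
    -- split the sum
    have hsum : ∑ i, CliffordAlgebra.ι Q (e i) * fderiv ℝ q x (e i)
        = (∑ i, c₀ • (CliffordAlgebra.ι Q (e i) * (CliffordAlgebra.ι Q x * fderiv ℝ p x (e i))))
          + (∑ i, c₀ • (CliffordAlgebra.ι Q (e i) * (CliffordAlgebra.ι Q (e i) * p x)))
          + (∑ i, (γ * x i) • (CliffordAlgebra.ι Q (e i) * (CliffordAlgebra.ι Q x * p x))) := by
      rw [← Finset.sum_add_distrib, ← Finset.sum_add_distrib]
      refine Finset.sum_congr rfl fun i _ => ?_
      rw [happ i, mul_add, mul_add, mul_smul_comm, mul_smul_comm, mul_smul_comm]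
    rw [hsum]
    -- sum 1
    have hS1 : ∑ i, c₀ • (CliffordAlgebra.ι Q (e i) * (CliffordAlgebra.ι Q x * fderiv ℝ p x (e i)))
        = (c₀ * (-2 * m)) • p x := by
      have hterm : ∀ i, CliffordAlgebra.ι Q (e i) * (CliffordAlgebra.ι Q x * fderiv ℝ p x (e i))
          = (-2 * x i) • fderiv ℝ p x (e i)
            - CliffordAlgebra.ι Q x * (CliffordAlgebra.ι Q (e i) * fderiv ℝ p x (e i)) := by
        intro i
        rw [← mul_assoc, CliffordAlgebra.ι_mul_ι_comm, sub_mul, ← Algebra.smul_def, hpolar i,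
          mul_assoc]
      calc ∑ i, c₀ • (CliffordAlgebra.ι Q (e i) * (CliffordAlgebra.ι Q x * fderiv ℝ p x (e i)))
          = c₀ • ((∑ i, (-2 * x i) • fderiv ℝ p x (e i))
              - CliffordAlgebra.ι Q x * ∑ i, CliffordAlgebra.ι Q (e i) * fderiv ℝ p x (e i)) := by
            rw [← Finset.smul_sum]
            congr 1
            rw [Finset.mul_sum, ← Finset.sum_sub_distrib]
            exact Finset.sum_congr rfl fun i _ => hterm i
        _ = c₀ • ((-2 : ℝ) • ((m : ℝ) • p x)) := by
            rw [hp_mono x, mul_zero, sub_zero, ← hfx]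
            congr 1
            rw [Finset.smul_sum]
            exact Finset.sum_congr rfl fun i _ => by rw [mul_smul]
        _ = (c₀ * (-2 * m)) • p x := by
            module
    -- sum 2
    have hS2 : ∑ i, c₀ • (CliffordAlgebra.ι Q (e i) * (CliffordAlgebra.ι Q (e i) * p x))
        = (c₀ * (-(n + 1))) • p x := by
      have hterm : ∀ i : Fin (n + 1), CliffordAlgebra.ι Q (e i) * (CliffordAlgebra.ι Q (e i) * p x)
          = (-1 : ℝ) • p x := by
        intro i
        rw [← mul_assoc, CliffordAlgebra.ι_sq_scalar, ← Algebra.smul_def, hQe i]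
      rw [Finset.sum_congr rfl fun i _ => congrArg (c₀ • ·) (hterm i)]
      rw [Finset.sum_const, Finset.card_univ, Fintype.card_fin]
      push_cast
      module
    -- sum 3
    have hS3 : ∑ i, (γ * x i) • (CliffordAlgebra.ι Q (e i) * (CliffordAlgebra.ι Q x * p x))
        = (γ * (-‖x‖ ^ 2)) • p x := by
      have h1 : ∑ i, (γ * x i) • (CliffordAlgebra.ι Q (e i) * (CliffordAlgebra.ι Q x * p x))
          = γ • ((∑ i, x i • CliffordAlgebra.ι Q (e i)) * (CliffordAlgebra.ι Q x * p x)) := by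
        rw [Finset.sum_mul, Finset.smul_sum]
        refine Finset.sum_congr rfl fun i _ => ?_
        rw [smul_mul_assoc, smul_smul]
      rw [h1, hιx, ← mul_assoc, CliffordAlgebra.ι_sq_scalar, ← Algebra.smul_def, hQx,
        smul_smul]
    rw [hS1, hS2, hS3, ← add_smul, ← add_smul]
    convert zero_smul ℝ (p x) using 2
    rw [hγ, hc₀, zpow_sub_one₀ hxne, hN]
    push_cast
    field_simp
    ring
  · intro t ht x hx
    have htne : t ≠ 0 := ne_of_gt ht
    have hxne : ‖x‖ ≠ 0 := norm_ne_zero_iff.mpr hx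
    rw [hq, hq]
    rw [norm_smul, Real.norm_eq_abs, abs_of_pos ht, map_smul, hp_hom t ht x,
      smul_mul_smul_comm, smul_smul, smul_smul]
    congr 1
    rw [mul_pow]
    field_simp
    ring
end Finiteness
end
end

section
/- Let n ≥ 1 and work on EuclideanSpace ℝ (Fin (n+1)) with quadratic form Q x = -‖x‖², Clifford algebra Cl = CliffordAlgebra Q and embedding ι. Let m ∈ ℕ and let q : EuclideanSpace ℝ (Fin (n+1)) \ {0} → Cl be a smooth left monogenic function homogeneous of degree −(n+m). Then the function p(x) := ‖x‖^{2m+n-1} • (ι(x) * q(x)) is left monogenic on EuclideanSpace ℝ (Fin (n+1)) \ {0} and homogeneous of degree m. (In particular, on the unit sphere ω · q_m(ω) lies in P_m whenever q_m ∈ Q_m.) -/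
open Function
open scoped ENNReal

noncomputable section

section AuxAlgebra

variable {N : ℕ} (Q : QuadraticForm ℝ (EuclideanSpace ℝ (Fin N)))


lemma euclid_eq_sum (v : EuclideanSpace ℝ (Fin N)) : v = ∑ i, v i • e i := by
  ext j
  have : (∑ i, v i • e i) j = ∑ i, (v i • e i) j := by
    simp only [WithLp.ofLp_sum, Finset.sum_apply]
  rw [this]
  simp [e, EuclideanSpace.single_apply]

lemma polar_eq (hQ : ∀ x, Q x = -‖x‖ ^ 2) (u v : EuclideanSpace ℝ (Fin N)) :
    QuadraticMap.polar Q u v = -2 * (inner ℝ u v : ℝ) := by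
  simp only [QuadraticMap.polar, hQ, @norm_add_sq_real]
  ring

lemma ι_anticomm (hQ : ∀ x, Q x = -‖x‖ ^ 2) {i j : Fin N} (hij : i ≠ j) :
    CliffordAlgebra.ι Q (e j) * CliffordAlgebra.ι Q (e i)
      = -(CliffordAlgebra.ι Q (e i) * CliffordAlgebra.ι Q (e j)) := by
  have h := CliffordAlgebra.mul_add_swap_eq_polar_of_forall_mul_self_eq (Q := Q)
    (CliffordAlgebra.ι Q) (CliffordAlgebra.ι_sq_scalar Q) (e j) (e i)
  have hpol : QuadraticMap.polar Q (e j) (e i) = 0 := by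
    rw [polar_eq Q hQ]
    have : (inner ℝ (e j) (e i) : ℝ) = 0 := by
      simp [e, EuclideanSpace.inner_single_left, EuclideanSpace.single_apply, hij]
    rw [this]; ring
  rw [hpol, map_zero] at h
  exact eq_neg_of_add_eq_zero_left h

lemma ι_e_sq (hQ : ∀ x, Q x = -‖x‖ ^ 2) (i : Fin N) :
    CliffordAlgebra.ι Q (e i) * CliffordAlgebra.ι Q (e i)
      = algebraMap ℝ (CliffordAlgebra Q) (-1) := by
  rw [CliffordAlgebra.ι_sq_scalar]
  congr 1
  rw [hQ]
  simp [e]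

/-- product of `ι (e i)` over a sorted enumeration of a finset -/
def gp (s : Finset (Fin N)) : CliffordAlgebra Q :=
  ((s.sort (· ≤ ·)).map (fun i => CliffordAlgebra.ι Q (e i))).prod

lemma sorted_prod_eq_gp {l : List (Fin N)} (hl : l.Pairwise (· < ·)) :
    (l.map (fun i => CliffordAlgebra.ι Q (e i))).prod = gp Q l.toFinset := by
  rw [gp, (List.toFinset_sort (· ≤ ·) hl.nodup).mpr (hl.imp le_of_lt)]

lemma keyC (hQ : ∀ x, Q x = -‖x‖ ^ 2) :
    ∀ (l : List (Fin N)), l.Pairwise (· < ·) → ∀ j : Fin N,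
      ∃ (c : ℝ) (l' : List (Fin N)), l'.Pairwise (· < ·) ∧ (∀ a ∈ l', a = j ∨ a ∈ l) ∧
        CliffordAlgebra.ι Q (e j) * (l.map (fun i => CliffordAlgebra.ι Q (e i))).prod
          = c • (l'.map (fun i => CliffordAlgebra.ι Q (e i))).prod := by
  intro l
  induction l with
  | nil =>
    intro _ j
    refine ⟨1, [j], List.pairwise_singleton _ j, by simp, by simp⟩
  | cons i l'' IH =>
    intro hsort j
    rw [List.pairwise_cons] at hsort
    obtain ⟨hi, hsort''⟩ := hsort
    rcases lt_trichotomy j i with hji | rfl | hij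
    · refine ⟨1, j :: i :: l'', ?_, ?_, by simp⟩
      · rw [List.pairwise_cons]
        refine ⟨?_, List.pairwise_cons.mpr ⟨hi, hsort''⟩⟩
        intro b hb
        rcases List.mem_cons.mp hb with rfl | hb'
        · exact hji
        · exact hji.trans (hi b hb')
      · intro a ha
        rcases List.mem_cons.mp ha with rfl | ha' <;> simp_all
    · refine ⟨-1, l'', hsort'', fun a ha => Or.inr (List.mem_cons_of_mem _ ha), ?_⟩
      rw [List.map_cons, List.prod_cons, ← mul_assoc, ι_e_sq Q hQ,
        Algebra.algebraMap_eq_smul_one]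
      simp
    · obtain ⟨c, l₀, hl₀s, hl₀m, hl₀e⟩ := IH hsort'' j
      refine ⟨-c, i :: l₀, ?_, ?_, ?_⟩
      · rw [List.pairwise_cons]
        refine ⟨fun b hb => ?_, hl₀s⟩
        rcases hl₀m b hb with rfl | hb'
        · exact hij
        · exact hi b hb'
      · intro a ha
        rcases List.mem_cons.mp ha with rfl | ha'
        · exact Or.inr List.mem_cons_self
        · rcases hl₀m a ha' with rfl | ha''
          · exact Or.inl rfl
          · exact Or.inr (List.mem_cons_of_mem _ ha'')
      · rw [List.map_cons, List.prod_cons, ← mul_assoc,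
          ι_anticomm Q hQ (Ne.symm (ne_of_gt hij)), neg_mul, mul_assoc, hl₀e,
          List.map_cons, List.prod_cons, mul_smul_comm]
        simp [neg_smul]

lemma keyD (hQ : ∀ x, Q x = -‖x‖ ^ 2) :
    ∀ l : List (Fin N), ∃ (c : ℝ) (l' : List (Fin N)), l'.Pairwise (· < ·) ∧
      (l.map (fun i => CliffordAlgebra.ι Q (e i))).prod
        = c • (l'.map (fun i => CliffordAlgebra.ι Q (e i))).prod := by
  intro l
  induction l with
  | nil => exact ⟨1, [], List.Pairwise.nil, by simp⟩
  | cons i l'' IH =>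
    obtain ⟨c, l₀, hl₀s, hl₀e⟩ := IH
    obtain ⟨c₂, l₁, hl₁s, _, hl₁e⟩ := keyC Q hQ l₀ hl₀s i
    refine ⟨c * c₂, l₁, hl₁s, ?_⟩
    rw [List.map_cons, List.prod_cons, hl₀e, mul_smul_comm, hl₁e, smul_smul]

lemma gp_span_top (hQ : ∀ x, Q x = -‖x‖ ^ 2) :
    Submodule.span ℝ (Set.range (gp Q)) = ⊤ := by
  rw [eq_top_iff]
  rintro x -
  induction x using CliffordAlgebra.induction with
  | algebraMap r =>
    have h1 : (1 : CliffordAlgebra Q) = gp Q ∅ := by simp [gp]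
    rw [Algebra.algebraMap_eq_smul_one, h1]
    exact Submodule.smul_mem _ _ (Submodule.subset_span ⟨∅, rfl⟩)
  | ι v =>
    rw [euclid_eq_sum v, map_sum]
    refine Submodule.sum_mem _ fun i _ => ?_
    rw [map_smul]
    refine Submodule.smul_mem _ _ (Submodule.subset_span ⟨{i}, ?_⟩)
    simp [gp]
  | mul x y hx hy =>
    have hmul : Submodule.span ℝ (Set.range (gp Q)) * Submodule.span ℝ (Set.range (gp Q))
        ≤ Submodule.span ℝ (Set.range (gp Q)) := by
      rw [Submodule.span_mul_span]
      rw [Submodule.span_le]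
      rintro z ⟨a, ⟨s, rfl⟩, b, ⟨t, rfl⟩, rfl⟩
      show gp Q s * gp Q t ∈ Submodule.span ℝ (Set.range (gp Q))
      have : gp Q s * gp Q t
          = (((s.sort (· ≤ ·)) ++ (t.sort (· ≤ ·))).map
              (fun i => CliffordAlgebra.ι Q (e i))).prod := by
        rw [List.map_append, List.prod_append]; rfl
      obtain ⟨c, l', hl's, hl'e⟩ := keyD Q hQ ((s.sort (· ≤ ·)) ++ (t.sort (· ≤ ·)))
      rw [this, hl'e, sorted_prod_eq_gp Q hl's]
      exact Submodule.smul_mem _ _ (Submodule.subset_span ⟨_, rfl⟩)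
    exact hmul (Submodule.mul_mem_mul hx hy)
  | add x y hx hy => exact Submodule.add_mem _ hx hy

lemma cliffordFinite_s7 (hQ : ∀ x, Q x = -‖x‖ ^ 2) : Module.Finite ℝ (CliffordAlgebra Q) := by
  haveI := Classical.decEq (CliffordAlgebra Q)
  refine ⟨⟨Finset.univ.image (gp Q), ?_⟩⟩
  rw [Finset.coe_image, Finset.coe_univ, Set.image_univ]
  exact gp_span_top Q hQ

end AuxAlgebra

lemma hasFDerivAt_norm' {E : Type*} [NormedAddCommGroup E] [InnerProductSpace ℝ E] {x : E}
    (hx : x ≠ 0) : HasFDerivAt (fun y : E => ‖y‖) (‖x‖⁻¹ • innerSL ℝ x) x := by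
  have h1 : HasFDerivAt (fun y : E => ‖y‖ ^ 2) ((2 : ℕ) • innerSL ℝ x) x :=
    (hasStrictFDerivAt_norm_sq x).hasFDerivAt
  have hnx0 : ‖x‖ ≠ 0 := norm_ne_zero_iff.mpr hx
  have hx2 : ‖x‖ ^ 2 ≠ 0 := pow_ne_zero _ hnx0
  have h2 : HasDerivAt Real.sqrt (1 / (2 * Real.sqrt (‖x‖ ^ 2))) (‖x‖ ^ 2) :=
    Real.hasDerivAt_sqrt hx2
  have h3 := h2.comp_hasFDerivAt x h1
  have hfun : (Real.sqrt ∘ fun y : E => ‖y‖ ^ 2) = fun y : E => ‖y‖ := by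
    funext y
    simp [Function.comp, Real.sqrt_sq (norm_nonneg y)]
  rw [hfun] at h3
  refine h3.congr_fderiv ?_
  rw [Real.sqrt_sq (norm_nonneg x)]
  ext v
  simp only [ContinuousLinearMap.smul_apply, ← Nat.cast_smul_eq_nsmul ℝ]
  simp only [ContinuousLinearMap.smul_apply, smul_eq_mul]
  field_simp
  ring

set_option maxHeartbeats 2000000 in
/-- If `q` is left monogenic away from the origin and homogeneous of degree
`-(n+m)`, then `p x = ‖x‖^{2m+n-1} • (ι x * q x)` is left monogenic away from the origin and
homogeneous of degree `m` (so on the sphere `ω ↦ ι ω * q ω` lies in `P_m`). -/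
theorem inversion_Qm_to_Pm (n : ℕ) (hn : 1 ≤ n)
    (Q : QuadraticForm ℝ (EuclideanSpace ℝ (Fin (n + 1))))
    (hQ : ∀ x, Q x = -‖x‖ ^ 2)
    (m : ℕ)
    (q : EuclideanSpace ℝ (Fin (n + 1)) → CliffordAlgebra Q)
    (hq : ContDiffOn ℝ (⊤ : ℕ∞) q {0}ᶜ)
    (hq_mono : ∀ x : EuclideanSpace ℝ (Fin (n + 1)), x ≠ 0 →
      ∑ i, CliffordAlgebra.ι Q (e i) * fderiv ℝ q x (e i) = 0)
    (hq_hom : ∀ t : ℝ, 0 < t → ∀ x : EuclideanSpace ℝ (Fin (n + 1)), x ≠ 0 →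
      q (t • x) = (t ^ (n + m))⁻¹ • q x)
    (p : EuclideanSpace ℝ (Fin (n + 1)) → CliffordAlgebra Q)
    (hp : ∀ x, p x = ‖x‖ ^ (2 * m + n - 1) • (CliffordAlgebra.ι Q x * q x)) :
    (∀ x : EuclideanSpace ℝ (Fin (n + 1)), x ≠ 0 →
      ∑ i, CliffordAlgebra.ι Q (e i) * fderiv ℝ p x (e i) = 0) ∧
    (∀ t : ℝ, 0 < t → ∀ x : EuclideanSpace ℝ (Fin (n + 1)), x ≠ 0 →
      p (t • x) = t ^ m • p x) := by
  haveI hfin : FiniteDimensional ℝ (CliffordAlgebra Q) := cliffordFinite_s7 Q hQ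
  haveI : IsTopologicalAddGroup (CliffordAlgebra Q) := SeminormedAddCommGroup.toIsTopologicalAddGroup
  haveI : @IsTopologicalAddGroup (CliffordAlgebra Q) _
      (inferInstance : NormedAddCommGroup (CliffordAlgebra Q)).toAddCommGroup.toAddGroup :=
    SeminormedAddCommGroup.toIsTopologicalAddGroup
  haveI : @ContinuousSMul ℝ (CliffordAlgebra Q)
      (inferInstance : NormedSpace ℝ (CliffordAlgebra Q)).toModule.toSMul _ _ :=
    @IsBoundedSMul.continuousSMul _ _ _ _ _ _ _ NormedSpace.toIsBoundedSMul
  haveI : ContinuousSMul ℝ (CliffordAlgebra Q) := by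
    exact @IsBoundedSMul.continuousSMul _ _ _ _ _ _ _ NormedSpace.toIsBoundedSMul
  haveI : @IsScalarTower ℝ ℝ (CliffordAlgebra Q) _
      (inferInstance : NormedSpace ℝ (CliffordAlgebra Q)).toModule.toSMul
      (inferInstance : NormedSpace ℝ (CliffordAlgebra Q)).toModule.toSMul := by
    exact IsScalarTower.left ℝ
  constructor
  · -- monogenicity
    intro x hx
    have hx' : x ∈ ({0}ᶜ : Set (EuclideanSpace ℝ (Fin (n + 1)))) := hx
    have hxn : ‖x‖ ≠ 0 := norm_ne_zero_iff.mpr hx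
    have hdq : DifferentiableAt ℝ q x :=
      ((hq x hx').contDiffAt (isOpen_compl_singleton.mem_nhds hx')).differentiableAt (by simp)
    -- Euler's identity
    have heuler : fderiv ℝ q x x = (-((n : ℝ) + m)) • q x := by
      have hsm : HasDerivAt (fun tt : ℝ => tt • x) x 1 := by
        simpa using (hasDerivAt_id (1 : ℝ)).smul_const x
      have h0 : HasFDerivAt q (fderiv ℝ q x) ((1 : ℝ) • x) := by
        rw [one_smul]; exact hdq.hasFDerivAt
      have h1 : HasDerivAt (fun tt : ℝ => q (tt • x)) (fderiv ℝ q x x) 1 :=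
        h0.comp_hasDerivAt 1 hsm
      have ha : HasDerivAt (fun tt : ℝ => (tt ^ (n + m))⁻¹) (-((n : ℝ) + m)) 1 := by
        have hb := hasDerivAt_pow (n + m) (1 : ℝ)
        have hc := hb.inv (by simp)
        refine hc.congr_deriv ?_
        push_cast
        simp
      have h2 : HasDerivAt (fun tt : ℝ => (tt ^ (n + m))⁻¹ • q x) ((-((n : ℝ) + m)) • q x) 1 :=
        ha.smul_const (q x)
      have heq : (fun tt : ℝ => q (tt • x)) =ᶠ[nhds 1] fun tt : ℝ => (tt ^ (n + m))⁻¹ • q x := by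
        filter_upwards [isOpen_Ioi.mem_nhds (show (1 : ℝ) ∈ Set.Ioi 0 by norm_num)] with t ht
        exact hq_hom t ht x hx
      exact h1.unique (h2.congr_of_eventuallyEq heq)
    -- the derivative of p
    let ιL : EuclideanSpace ℝ (Fin (n + 1)) →L[ℝ] CliffordAlgebra Q :=
      LinearMap.toContinuousLinearMap (CliffordAlgebra.ι Q)
    let mulL : CliffordAlgebra Q →L[ℝ] CliffordAlgebra Q →L[ℝ] CliffordAlgebra Q :=
      LinearMap.toContinuousLinearMap
        (((LinearMap.toContinuousLinearMap :
            (CliffordAlgebra Q →ₗ[ℝ] CliffordAlgebra Q) ≃ₗ[ℝ]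
              (CliffordAlgebra Q →L[ℝ] CliffordAlgebra Q)).toLinearMap).comp
          (LinearMap.mul ℝ (CliffordAlgebra Q)))
    have hmul_apply : ∀ a b : CliffordAlgebra Q, mulL a b = a * b := fun _ _ => rfl
    have hιL : ∀ v, ιL v = CliffordAlgebra.ι Q v := fun _ => rfl
    set s := 2 * m + n - 1 with hs
    have hc : HasFDerivAt (fun y => mulL (ιL y)) (mulL.comp ιL) x :=
      (mulL.comp ιL).hasFDerivAt
    have hF : HasFDerivAt (fun y => mulL (ιL y) (q y))
        (HAdd.hAdd (α := EuclideanSpace ℝ (Fin (n + 1)) →L[ℝ] CliffordAlgebra Q) (β := EuclideanSpace ℝ (Fin (n + 1)) →L[ℝ] CliffordAlgebra Q) (γ := EuclideanSpace ℝ (Fin (n + 1)) →L[ℝ] CliffordAlgebra Q)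
          ((mulL (ιL x)).comp (fderiv ℝ q x)) ((mulL.comp ιL).flip (q x))) x :=
      hc.clm_apply hdq.hasFDerivAt
    have hN : HasFDerivAt (fun y : EuclideanSpace ℝ (Fin (n + 1)) => ‖y‖ ^ s)
        (((s : ℝ) * ‖x‖ ^ (s - 1)) • (‖x‖⁻¹ • innerSL ℝ x)) x := by
      exact (hasDerivAt_pow s ‖x‖).comp_hasFDerivAt x (hasFDerivAt_norm' hx)
    have hP : HasFDerivAt p
        (‖x‖ ^ s • (HAdd.hAdd (α := EuclideanSpace ℝ (Fin (n + 1)) →L[ℝ] CliffordAlgebra Q) (β := EuclideanSpace ℝ (Fin (n + 1)) →L[ℝ] CliffordAlgebra Q) (γ := EuclideanSpace ℝ (Fin (n + 1)) →L[ℝ] CliffordAlgebra Q)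
          ((mulL (ιL x)).comp (fderiv ℝ q x)) ((mulL.comp ιL).flip (q x)))
          + (((s : ℝ) * ‖x‖ ^ (s - 1)) • (‖x‖⁻¹ • innerSL ℝ x)).smulRight
              (mulL (ιL x) (q x))) x := by
      have hpe : p = fun y => ‖y‖ ^ s • mulL (ιL y) (q y) := by
        funext y
        rw [hp y, hmul_apply, hιL]
      rw [hpe]
      exact hN.smul hF
    have hfd := hP.fderiv
    have happ : ∀ i : Fin (n + 1), fderiv ℝ p x (e i)
        = ‖x‖ ^ s • (CliffordAlgebra.ι Q x * fderiv ℝ q x (e i)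
            + CliffordAlgebra.ι Q (e i) * q x)
          + ((s : ℝ) * ‖x‖ ^ (s - 1) * (‖x‖⁻¹ * x i)) • (CliffordAlgebra.ι Q x * q x) := by
      intro i
      rw [hfd]
      have hinner : (innerSL ℝ x) (e i) = x i := by
        simp [e, EuclideanSpace.inner_single_right]
      simp only [ContinuousLinearMap.add_apply, ContinuousLinearMap.coe_smul', Pi.smul_apply,
        ContinuousLinearMap.coe_comp', Function.comp_apply, ContinuousLinearMap.flip_apply,
        ContinuousLinearMap.smulRight_apply, ContinuousLinearMap.smul_apply, hinner,
        hmul_apply, hιL, smul_eq_mul]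
      erw [ContinuousLinearMap.add_apply]
      simp only [ContinuousLinearMap.coe_comp', Function.comp_apply]
      erw [ContinuousLinearMap.flip_apply, ContinuousLinearMap.comp_apply]
      rfl

    -- the three sums
    have hιx : ∑ i, x i • CliffordAlgebra.ι Q (e i) = CliffordAlgebra.ι Q x := by
      conv_rhs => rw [euclid_eq_sum x]
      rw [map_sum]
      simp_rw [map_smul]
    have hux : ∑ i, x i • fderiv ℝ q x (e i) = fderiv ℝ q x x := by
      have key : ∀ L : EuclideanSpace ℝ (Fin (n + 1)) →L[ℝ] CliffordAlgebra Q,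
          L x = ∑ i, x i • L (e i) := by
        intro L
        conv_lhs => rw [euclid_eq_sum x]
        rw [map_sum]
        simp_rw [map_smul]
      exact (key (fderiv ℝ q x)).symm
    have hS1 : ∑ i, CliffordAlgebra.ι Q (e i) * (CliffordAlgebra.ι Q x * fderiv ℝ q x (e i))
        = ((2 : ℝ) * ((n : ℝ) + m)) • q x := by
      have hterm : ∀ i : Fin (n + 1),
          CliffordAlgebra.ι Q (e i) * (CliffordAlgebra.ι Q x * fderiv ℝ q x (e i))
            = (-2 : ℝ) • (x i • fderiv ℝ q x (e i))
              - CliffordAlgebra.ι Q x * (CliffordAlgebra.ι Q (e i) * fderiv ℝ q x (e i)) := by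
        intro i
        have h := CliffordAlgebra.mul_add_swap_eq_polar_of_forall_mul_self_eq (Q := Q)
          (CliffordAlgebra.ι Q) (CliffordAlgebra.ι_sq_scalar Q) (e i) x
        have hpol : QuadraticMap.polar Q (e i) x = -2 * x i := by
          rw [polar_eq Q hQ]
          congr 1
          simp [e, EuclideanSpace.inner_single_left]
        rw [hpol] at h
        have h2 : CliffordAlgebra.ι Q (e i) * CliffordAlgebra.ι Q x
            = algebraMap ℝ (CliffordAlgebra Q) (-2 * x i)
              - CliffordAlgebra.ι Q x * CliffordAlgebra.ι Q (e i) := eq_sub_of_add_eq h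
        calc CliffordAlgebra.ι Q (e i) * (CliffordAlgebra.ι Q x * fderiv ℝ q x (e i))
            = (CliffordAlgebra.ι Q (e i) * CliffordAlgebra.ι Q x) * fderiv ℝ q x (e i) :=
              (mul_assoc _ _ _).symm
          _ = (algebraMap ℝ (CliffordAlgebra Q) (-2 * x i)
                - CliffordAlgebra.ι Q x * CliffordAlgebra.ι Q (e i)) * fderiv ℝ q x (e i) := by
              rw [h2]
          _ = (-2 : ℝ) • (x i • fderiv ℝ q x (e i))
                - CliffordAlgebra.ι Q x * (CliffordAlgebra.ι Q (e i) * fderiv ℝ q x (e i)) := by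
              rw [sub_mul, ← Algebra.smul_def, mul_assoc, mul_smul]
      rw [Finset.sum_congr rfl fun i _ => hterm i, Finset.sum_sub_distrib,
        ← Finset.smul_sum, hux, ← Finset.mul_sum, hq_mono x hx, mul_zero, sub_zero, heuler,
        smul_smul]
      congr 1
      ring
    have hS2 : ∑ i, CliffordAlgebra.ι Q (e i) * (CliffordAlgebra.ι Q (e i) * q x)
        = (-((n : ℝ) + 1)) • q x := by
      have hterm : ∀ i : Fin (n + 1),
          CliffordAlgebra.ι Q (e i) * (CliffordAlgebra.ι Q (e i) * q x)
            = (-1 : ℝ) • q x := by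
        intro i
        rw [← mul_assoc, ι_e_sq Q hQ, ← Algebra.smul_def]
      rw [Finset.sum_congr rfl fun i _ => hterm i, Finset.sum_const, Finset.card_univ,
        Fintype.card_fin, ← Nat.cast_smul_eq_nsmul ℝ, smul_smul]
      congr 1
      push_cast
      ring
    have hS3 : ∑ i, x i • (CliffordAlgebra.ι Q (e i) * (CliffordAlgebra.ι Q x * q x))
        = (-‖x‖ ^ 2) • q x := by
      calc ∑ i, x i • (CliffordAlgebra.ι Q (e i) * (CliffordAlgebra.ι Q x * q x))
          = ∑ i, (x i • CliffordAlgebra.ι Q (e i)) * (CliffordAlgebra.ι Q x * q x) := by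
            simp_rw [smul_mul_assoc]
        _ = (∑ i, x i • CliffordAlgebra.ι Q (e i)) * (CliffordAlgebra.ι Q x * q x) :=
            (Finset.sum_mul _ _ _).symm
        _ = CliffordAlgebra.ι Q x * (CliffordAlgebra.ι Q x * q x) := by rw [hιx]
        _ = (CliffordAlgebra.ι Q x * CliffordAlgebra.ι Q x) * q x := (mul_assoc _ _ _).symm
        _ = (-‖x‖ ^ 2) • q x := by
            rw [CliffordAlgebra.ι_sq_scalar, ← Algebra.smul_def, hQ]
    -- put everything together
    have hsum : ∑ i, CliffordAlgebra.ι Q (e i) * fderiv ℝ p x (e i)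
        = ‖x‖ ^ s • (∑ i, CliffordAlgebra.ι Q (e i)
              * (CliffordAlgebra.ι Q x * fderiv ℝ q x (e i)))
          + ‖x‖ ^ s • (∑ i, CliffordAlgebra.ι Q (e i) * (CliffordAlgebra.ι Q (e i) * q x))
          + ((s : ℝ) * ‖x‖ ^ (s - 1) * ‖x‖⁻¹)
              • (∑ i, x i • (CliffordAlgebra.ι Q (e i)
                  * (CliffordAlgebra.ι Q x * q x))) := by
      rw [Finset.smul_sum, Finset.smul_sum, Finset.smul_sum, ← Finset.sum_add_distrib,
        ← Finset.sum_add_distrib]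
      refine Finset.sum_congr rfl fun i _ => ?_
      rw [happ i, mul_add, mul_smul_comm, mul_smul_comm, mul_add, smul_add, smul_smul]
      congr 2
      ring
    rw [hsum, hS1, hS2, hS3, smul_smul, smul_smul, smul_smul, ← add_smul, ← add_smul]
    apply smul_eq_zero_of_left
    have h3 : ‖x‖⁻¹ * ‖x‖ = 1 := inv_mul_cancel₀ hxn
    rcases Nat.eq_zero_or_pos s with hs0 | hs0
    · have hn1 : n = 1 ∧ m = 0 := by omega
      obtain ⟨rfl, rfl⟩ := hn1
      rw [hs0]
      norm_num
    · obtain ⟨k, hk⟩ : ∃ k, s = k + 1 := ⟨s - 1, by omega⟩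
      have hcast : (s : ℝ) = 2 * (m : ℝ) + n - 1 := by
        rw [hs, Nat.cast_sub (by omega : 1 ≤ 2 * m + n)]
        push_cast
        ring
      have hsk : s - 1 = k := by omega
      rw [hsk, hk]
      rw [hk] at hcast
      push_cast at hcast
      push_cast
      linear_combination (-(‖x‖ ^ (k + 1))) * hcast - (((k : ℝ) + 1) * ‖x‖ ^ (k + 1)) * h3



  · -- homogeneity
    intro t ht x hx
    have hxn : ‖x‖ ≠ 0 := norm_ne_zero_iff.mpr hx
    have htn : t ≠ 0 := ne_of_gt ht
    rw [hp, hp]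
    have h1 : ‖t • x‖ = t * ‖x‖ := by
      rw [norm_smul, Real.norm_eq_abs, abs_of_pos ht]
    rw [h1, map_smul, hq_hom t ht x hx, mul_pow]
    rw [smul_mul_assoc, mul_smul_comm, smul_smul, smul_smul, smul_smul]
    congr 1
    have hpow : t ^ (2 * m + n - 1) * t = t ^ m * t ^ (n + m) := by
      rw [← pow_succ, ← pow_add]
      congr 1
      omega
    field_simp
    linear_combination hpow
end
end

section
/- Let n ≥ 1 and m ≥ 1. The real vector space of harmonic polynomials in n+1 real variables that are homogeneous of degree m (i.e. p ∈ MvPolynomial (Fin (n+1)) ℝ with p homogeneous of degree m and ∑_i ∂_i² p = 0) has dimension (2m + n − 1) · (m + n − 2)! / ((n − 1)! · m!), equivalently Nat.choose (m+n) n − Nat.choose (m+n−2) n. -/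
/-!
Write `Hₘ` for the homogeneous polynomials of degree `m` in `n + 1` variables; counting
monomials gives `dim Hₘ = C(m + n, n)`. The Laplacian maps `Hₘ₊₂` onto `Hₘ`: for a monomial
`x^α` of degree `m`, `Δ x^(α + 2e₀)` is `(α₀ + 2)(α₀ + 1) x^α` plus multiples of monomials whose
`x₀`-exponent is `α₀ + 2`, so `x^α` lies in the image by induction on `m - α₀`. Rank–nullity
then gives `dim (Hₘ₊₂ ∩ ker Δ) = dim Hₘ₊₂ - dim Hₘ`, while in degree `1` every polynomial is
harmonic.
-/

open scoped BigOperators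

/-- The polynomial Laplacian `Δ p = ∑ i, ∂ᵢ (∂ᵢ p)` as a linear map. -/
noncomputable def polyLaplacian (n : ℕ) :
    MvPolynomial (Fin (n + 1)) ℝ →ₗ[ℝ] MvPolynomial (Fin (n + 1)) ℝ :=
  ∑ i : Fin (n + 1),
    ((MvPolynomial.pderiv i).toLinearMap ∘ₗ (MvPolynomial.pderiv i).toLinearMap)

open MvPolynomial Module

theorem Submodule.finrank_map_add_finrank_inf_ker {K V W : Type*} [DivisionRing K]
    [AddCommGroup V] [Module K V] [AddCommGroup W] [Module K W]
    (f : V →ₗ[K] W) (p : Submodule K V) [FiniteDimensional K p] :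
    finrank K (p.map f) + finrank K ↥(p ⊓ LinearMap.ker f) = finrank K p := by
  rw [← (f.domRestrict p).finrank_range_add_finrank_ker, LinearMap.range_domRestrict,
    LinearMap.ker_domRestrict, ← (Submodule.comapSubtypeEquivOfLe inf_le_left).finrank_eq,
    Submodule.comap_inf, Submodule.comap_subtype_self, top_inf_eq]

open Nat in
theorem Nat.choose_add_sub_choose_add_sub_two {n m : ℕ} (hn : 1 ≤ n) (hm : 1 ≤ m) :
    (m + n).choose n - (m + n - 2).choose n =
      (2 * m + n - 1) * (m + n - 2)! / ((n - 1)! * m !) := by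
  obtain ⟨j, rfl⟩ := Nat.exists_eq_add_of_le' hn
  obtain ⟨k, rfl⟩ := Nat.exists_eq_add_of_le' hm
  refine (Nat.div_eq_of_eq_mul_left (by positivity) ?_).symm
  rcases k with _ | k
  · rw [show 0 + 1 + (j + 1) = j + 1 + 1 by ring, show j + 1 + 1 - 2 = j by omega,
      show 2 * (0 + 1) + (j + 1) - 1 = j + 2 by omega, Nat.choose_succ_self_right,
      Nat.choose_eq_zero_of_lt (Nat.lt_succ_self j)]
    simp
  · rw [show k + 1 + 1 + (j + 1) = k + j + 1 + 1 + 1 by ring,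
      show k + j + 1 + 1 + 1 - 2 = k + j + 1 by omega,
      show 2 * (k + 1 + 1) + (j + 1) - 1 = 2 * k + j + 4 by omega, Nat.add_sub_cancel]
    have hle : (k + j + 1).choose (j + 1) ≤ (k + j + 1 + 1 + 1).choose (j + 1) :=
      Nat.choose_le_choose _ (by omega)
    rw [← Nat.cast_inj (R := ℚ)]
    push_cast [Nat.cast_sub hle, Nat.cast_choose ℚ (show j + 1 ≤ k + j + 1 by omega),
      Nat.cast_choose ℚ (show j + 1 ≤ k + j + 1 + 1 + 1 by omega),
      show k + j + 1 + 1 + 1 - (j + 1) = k + 1 + 1 by omega, show k + j + 1 - (j + 1) = k by omega,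
      Nat.factorial_succ]
    field_simp
    ring

namespace MvPolynomial

theorem finrank_homogeneousSubmodule {R σ : Type*} [CommSemiring R] [StrongRankCondition R]
    [Fintype σ] (m : ℕ) :
    finrank R (homogeneousSubmodule σ R m) = (Fintype.card σ + m - 1).choose m := by
  classical
  have hset : {d : σ →₀ ℕ | d.degree = m} =
      ↑(Finset.univ.finsuppAntidiag m : Finset (σ →₀ ℕ)) := by
    ext d
    simp [Finsupp.degree_eq_sum]
  rw [homogeneousSubmodule_eq_finsupp_supported, hset, ← restrictSupport,
    finrank_eq_card_basis (basisRestrictSupport R _)]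
  simp [Finset.card_finsuppAntidiag_nat_eq_choose]

instance finite_homogeneousSubmodule {R σ : Type*} [CommSemiring R] [Finite σ] (m : ℕ) :
    Module.Finite R (homogeneousSubmodule σ R m) :=
  Module.Finite.iff_fg.mpr (homogeneousSubmodule_fg σ R m)

theorem finrank_homogeneousSubmodule_fin_succ {R : Type*} [CommSemiring R] [StrongRankCondition R]
    (n m : ℕ) : finrank R (homogeneousSubmodule (Fin (n + 1)) R m) = (m + n).choose n := by
  rw [finrank_homogeneousSubmodule, Fintype.card_fin, show n + 1 + m - 1 = m + n by omega,
    Nat.choose_symm_add]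

theorem IsHomogeneous.pderiv_eq_zero {R σ : Type*} [CommSemiring R] {φ : MvPolynomial σ R}
    (h : φ.IsHomogeneous 0) (i : σ) : pderiv i φ = 0 := by
  rw [totalDegree_eq_zero_iff_eq_C.mp ((totalDegree_zero_iff_isHomogeneous σ).mpr h), pderiv_C]

theorem pderiv_pderiv_monomial {R σ : Type*} [CommSemiring R] [DecidableEq σ]
    (i : σ) (s : σ →₀ ℕ) (a : R) :
    pderiv i (pderiv i (monomial s a)) =
      monomial (s - Finsupp.single i 2) (a * s i * (s i - 1 : ℕ)) := by
  simp [pderiv_monomial, tsub_tsub, ← Finsupp.single_add]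

end MvPolynomial

section Laplacian

variable {n : ℕ}

theorem polyLaplacian_apply (p : MvPolynomial (Fin (n + 1)) ℝ) :
    polyLaplacian n p = ∑ i, pderiv i (pderiv i p) := by
  simp [polyLaplacian, LinearMap.sum_apply]

theorem polyLaplacian_monomial (s : Fin (n + 1) →₀ ℕ) :
    polyLaplacian n (monomial s 1) =
      ∑ i, ((s i * (s i - 1) : ℕ) : ℝ) • monomial (s - Finsupp.single i 2) 1 := by
  simp only [polyLaplacian_apply, pderiv_pderiv_monomial, smul_monomial, smul_eq_mul, mul_one,
    one_mul, Nat.cast_mul]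

theorem MvPolynomial.IsHomogeneous.polyLaplacian {p : MvPolynomial (Fin (n + 1)) ℝ} {k : ℕ}
    (hp : p.IsHomogeneous k) : (polyLaplacian n p).IsHomogeneous (k - 2) := by
  rw [polyLaplacian_apply]
  exact IsHomogeneous.sum _ _ _ fun i _ ↦ by simpa [Nat.sub_sub] using hp.pderiv.pderiv (i := i)

theorem homogeneousSubmodule_le_ker_polyLaplacian {m : ℕ} (hm : m ≤ 1) :
    homogeneousSubmodule (Fin (n + 1)) ℝ m ≤ LinearMap.ker (polyLaplacian n) := by
  intro p hp
  rw [LinearMap.mem_ker, polyLaplacian_apply]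
  refine Finset.sum_eq_zero fun i _ ↦ IsHomogeneous.pderiv_eq_zero ?_ i
  simpa [Nat.sub_eq_zero_of_le hm] using ((mem_homogeneousSubmodule m p).mp hp).pderiv (i := i)

theorem monomial_mem_map_polyLaplacian {m : ℕ} (α : Fin (n + 1) →₀ ℕ)
    (hα : α.degree = m) :
    monomial α (1 : ℝ) ∈
      (homogeneousSubmodule (Fin (n + 1)) ℝ (m + 2)).map (polyLaplacian n) := by
  set S := (homogeneousSubmodule (Fin (n + 1)) ℝ (m + 2)).map (polyLaplacian n)
  induction hk : m - α 0 using Nat.strong_induction_on generalizing α with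
  | _ k ih =>
  set β := α + Finsupp.single 0 2
  have hβ : monomial β (1 : ℝ) ∈ homogeneousSubmodule (Fin (n + 1)) ℝ (m + 2) :=
    isHomogeneous_monomial _ (by simp [β, hα])
  have hΔ := Submodule.mem_map_of_mem (f := polyLaplacian n) hβ
  rw [polyLaplacian_monomial, Fin.sum_univ_succ] at hΔ
  have hrest : ∑ j : Fin n, ((β j.succ * (β j.succ - 1) : ℕ) : ℝ) •
      monomial (β - Finsupp.single j.succ 2) 1 ∈ S := by
    refine Submodule.sum_mem _ fun j _ ↦ ?_
    have hβj : β j.succ = α j.succ := by simp [β, Fin.succ_ne_zero]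
    rcases lt_or_ge (α j.succ) 2 with hj | hj
    · interval_cases α j.succ <;> simp [hβj]
    have hβ0 : (β - Finsupp.single j.succ 2 : Fin (n + 1) →₀ ℕ) 0 = α 0 + 2 := by
      simp [β, (Fin.succ_ne_zero j).symm]
    have htwo : α 0 + α j.succ ≤ m := by
      rw [← hα, Finsupp.degree_eq_sum, Fin.sum_univ_succ]
      gcongr
      exact Finset.single_le_sum (f := fun i ↦ α i.succ) (fun _ _ ↦ Nat.zero_le _)
        (Finset.mem_univ j)
    refine Submodule.smul_mem _ _ (ih _ (by omega) _ ?_ rfl)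
    have hle : Finsupp.single j.succ 2 ≤ β := Finsupp.single_le_iff.mpr (hβj ▸ hj)
    simpa [β, hα] using congrArg Finsupp.degree (tsub_add_cancel_of_le hle)
  rwa [Submodule.add_mem_iff_left S hrest, add_tsub_cancel_right,
    Submodule.smul_mem_iff S (Nat.cast_ne_zero.mpr (by simp [β]))] at hΔ

theorem map_polyLaplacian_homogeneousSubmodule (m : ℕ) :
    (homogeneousSubmodule (Fin (n + 1)) ℝ (m + 2)).map (polyLaplacian n) =
      homogeneousSubmodule (Fin (n + 1)) ℝ m := by
  refine le_antisymm (Submodule.map_le_iff_le_comap.mpr fun p hp ↦ ?_) ?_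
  · simpa using ((mem_homogeneousSubmodule _ p).mp hp).polyLaplacian
  · rw [homogeneousSubmodule_eq_finsupp_supported (Fin (n + 1)) ℝ m, ← restrictSupport,
      restrictSupport_eq_span, Submodule.span_le]
    rintro _ ⟨α, hα, rfl⟩
    exact monomial_mem_map_polyLaplacian α hα

theorem finrank_homogeneousSubmodule_inf_ker_polyLaplacian (m : ℕ) :
    finrank ℝ ↥(homogeneousSubmodule (Fin (n + 1)) ℝ (m + 2) ⊓
        LinearMap.ker (polyLaplacian n)) =
      finrank ℝ (homogeneousSubmodule (Fin (n + 1)) ℝ (m + 2)) -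
        finrank ℝ (homogeneousSubmodule (Fin (n + 1)) ℝ m) := by
  have := (homogeneousSubmodule (Fin (n + 1)) ℝ (m + 2)).finrank_map_add_finrank_inf_ker
    (polyLaplacian n)
  rw [map_polyLaplacian_homogeneousSubmodule] at this
  omega

end Laplacian

/-- The space of harmonic polynomials in `n+1` real variables that are
homogeneous of degree `m ≥ 1` has dimension
`(2m + n - 1)(m + n - 2)!/((n - 1)! m!) = C(m+n, n) - C(m+n-2, n)`. -/
theorem finrank_harmonic_homogeneous (n m : ℕ) (hn : 1 ≤ n) (hm : 1 ≤ m) :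
    Module.finrank ℝ
        ↥(MvPolynomial.homogeneousSubmodule (Fin (n + 1)) ℝ m ⊓
          LinearMap.ker (polyLaplacian n)) =
      (2 * m + n - 1) * Nat.factorial (m + n - 2) /
        (Nat.factorial (n - 1) * Nat.factorial m) ∧
    Module.finrank ℝ
        ↥(MvPolynomial.homogeneousSubmodule (Fin (n + 1)) ℝ m ⊓
          LinearMap.ker (polyLaplacian n)) =
      Nat.choose (m + n) n - Nat.choose (m + n - 2) n := by
  have hdim : finrank ℝ ↥(homogeneousSubmodule (Fin (n + 1)) ℝ m ⊓
      LinearMap.ker (polyLaplacian n)) = (m + n).choose n - (m + n - 2).choose n := by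
    obtain rfl | ⟨k, rfl⟩ : m = 1 ∨ ∃ k, m = k + 2 := by
      rcases m with _ | _ | k <;> simp_all
    · rw [inf_eq_left.mpr (homogeneousSubmodule_le_ker_polyLaplacian le_rfl),
        finrank_homogeneousSubmodule_fin_succ, Nat.choose_eq_zero_of_lt (by omega : 1 + n - 2 < n),
        Nat.sub_zero]
    · rw [finrank_homogeneousSubmodule_inf_ker_polyLaplacian,
        finrank_homogeneousSubmodule_fin_succ, finrank_homogeneousSubmodule_fin_succ,
        show k + 2 + n - 2 = k + n by omega]
  exact ⟨hdim.trans (Nat.choose_add_sub_choose_add_sub_two hn hm), hdim⟩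
end

section
/- Let n ≥ 1 and work on EuclideanSpace ℝ (Fin (n+1)) with quadratic form Q x = -‖x‖², Clifford algebra Cl = CliffordAlgebra Q and embedding ι. Let m ≥ 1 and let h : EuclideanSpace ℝ (Fin (n+1)) → Cl be a polynomial map (each coordinate with respect to a basis of Cl is a polynomial function) that is homogeneous of degree m and harmonic (∑_i (∂_i ∂_i h)(x) = 0 for all x). Then h decomposes uniquely as h(x) = p(x) + ι(x) * q(x), where p and q are polynomial maps into Cl, homogeneous of degrees m and m−1 respectively, and both left monogenic: ∑_i ι(e_i) * (∂_i p)(x) = 0 and ∑_i ι(e_i) * (∂_i q)(x) = 0 for all x. (This is the decomposition H_m = P_m ⊕ Q-part underlying L²(S^n) = ⊕_m (P_m ⊕ Q_m).) -/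
/-!
For a polynomial map `f` homogeneous of degree `d`, the Clifford relations
`eᵢ eⱼ + eⱼ eᵢ = -2 δᵢⱼ` and Euler's identity `∑ xᵢ ∂ᵢ f = d f` give
`D (x f) = -(n + 1 + 2d) f - x D f`, while `D² = -Δ` by symmetry of second derivatives.
So for harmonic `h`, `q := -D h / (n + 2m - 1)` is monogenic with `D (x q) = D h`, and
`p := h - x q` is monogenic. If two decompositions exist, their difference `r` of the `q`-parts
is monogenic and so is `x r`, whence `-(n + 1 + 2d) r = 0`.
-/

open Function
open scoped ENNReal

noncomputable section

/-- A map into a real vector space is a *polynomial map* if, in terms of some finite family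
of vectors (e.g. a basis), each component is a polynomial function of the coordinates. -/
def IsPolynomialMap {k : ℕ} {V : Type*} [AddCommGroup V] [Module ℝ V]
    (f : EuclideanSpace ℝ (Fin k) → V) : Prop :=
  ∃ (N : ℕ) (P : Fin N → MvPolynomial (Fin k) ℝ) (v : Fin N → V),
    ∀ x, f x = ∑ j, MvPolynomial.eval (fun i => x i) (P j) • v j

open MvPolynomial CliffordAlgebra

section PolynomialMap

variable {k : ℕ}

theorem MvPolynomial.hasFDerivAt_eval_euclidean (P : MvPolynomial (Fin k) ℝ)
    (x : EuclideanSpace ℝ (Fin k)) :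
    HasFDerivAt (fun y : EuclideanSpace ℝ (Fin k) => eval (fun i => y i) P)
      (∑ i, eval (fun i => x i) (pderiv i P) • EuclideanSpace.proj (𝕜 := ℝ) i) x := by
  induction P using MvPolynomial.induction_on with
  | C a => simpa using hasFDerivAt_const a x
  | add p q hp hq =>
    simp only [map_add]
    refine (hp.add hq).congr_fderiv ?_
    simp only [add_smul, Finset.sum_add_distrib]
  | mul_X p i hp =>
    simp only [map_mul, eval_X]
    refine (hp.mul (EuclideanSpace.proj i).hasFDerivAt).congr_fderiv ?_
    ext w
    simp [Pi.single_apply, Finset.sum_add_distrib, add_mul, Finset.mul_sum, apply_ite, mul_assoc]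

theorem MvPolynomial.fderiv_eval_euclidean_apply_e (P : MvPolynomial (Fin k) ℝ)
    (x : EuclideanSpace ℝ (Fin k)) (i : Fin k) :
    fderiv ℝ (fun y : EuclideanSpace ℝ (Fin k) => eval (fun i => y i) P) x (e i) =
      eval (fun i => x i) (pderiv i P) := by
  simp [(hasFDerivAt_eval_euclidean P x).fderiv, e]

theorem MvPolynomial.contDiff_eval_euclidean (P : MvPolynomial (Fin k) ℝ) {n : WithTop ℕ∞} :
    ContDiff ℝ n (fun y : EuclideanSpace ℝ (Fin k) => eval (fun i => y i) P) :=
  (AnalyticOnNhd.eval_continuousLinearMap' (fun i => EuclideanSpace.proj (𝕜 := ℝ) (ι := Fin k) i)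
    P).contDiff

namespace IsPolynomialMap

variable {V W : Type*} [AddCommGroup V] [Module ℝ V] [AddCommGroup W] [Module ℝ W]
  {f g : EuclideanSpace ℝ (Fin k) → V}

theorem zero : IsPolynomialMap (fun _ : EuclideanSpace ℝ (Fin k) => (0 : V)) :=
  ⟨0, Fin.elim0, Fin.elim0, by simp⟩

theorem add (hf : IsPolynomialMap f) (hg : IsPolynomialMap g) :
    IsPolynomialMap (fun x => f x + g x) := by
  obtain ⟨N, P, v, hf⟩ := hf
  obtain ⟨N', P', v', hg⟩ := hg
  exact ⟨N + N', Fin.append P P', Fin.append v v', by simp [Fin.sum_univ_add, hf, hg]⟩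

theorem const_smul (c : ℝ) (hf : IsPolynomialMap f) : IsPolynomialMap (fun x => c • f x) := by
  obtain ⟨N, P, v, hf⟩ := hf
  exact ⟨N, P, fun j => c • v j, by simp [hf, Finset.smul_sum, smul_comm c]⟩

theorem sub (hf : IsPolynomialMap f) (hg : IsPolynomialMap g) :
    IsPolynomialMap (fun x => f x - g x) := by
  simpa [sub_eq_add_neg] using hf.add (hg.const_smul (-1))

theorem sum {α : Type*} (s : Finset α) {f : α → EuclideanSpace ℝ (Fin k) → V}
    (hf : ∀ a ∈ s, IsPolynomialMap (f a)) : IsPolynomialMap (fun x => ∑ a ∈ s, f a x) := by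
  classical
  induction s using Finset.induction_on with
  | empty => simpa using zero
  | insert a s ha ih =>
    simp only [Finset.sum_insert ha]
    exact (hf a (s.mem_insert_self a)).add (ih fun b hb => hf b (Finset.mem_insert_of_mem hb))

theorem linearMap_comp (L : V →ₗ[ℝ] W) (hf : IsPolynomialMap f) :
    IsPolynomialMap (fun x => L (f x)) := by
  obtain ⟨N, P, v, hf⟩ := hf
  exact ⟨N, P, fun j => L (v j), by simp [hf]⟩

theorem coord_smul (i : Fin k) (hf : IsPolynomialMap f) :
    IsPolynomialMap (fun x => x i • f x) := by
  obtain ⟨N, P, v, hf⟩ := hf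
  exact ⟨N, fun j => X i * P j, v, by simp [hf, Finset.smul_sum, smul_smul, mul_comm]⟩

end IsPolynomialMap

variable {V W : Type*} [NormedAddCommGroup V] [NormedSpace ℝ V] [NormedAddCommGroup W]
  [NormedSpace ℝ W] {f : EuclideanSpace ℝ (Fin k) → V}

theorem fderiv_sum_eval_smul {N : ℕ} (P : Fin N → MvPolynomial (Fin k) ℝ) (v : Fin N → V)
    (x w : EuclideanSpace ℝ (Fin k)) :
    fderiv ℝ (fun y => ∑ j, eval (fun i => y i) (P j) • v j) x w =
      ∑ j, fderiv ℝ (fun y : EuclideanSpace ℝ (Fin k) => eval (fun i => y i) (P j)) x w • v j := by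
  rw [(HasFDerivAt.fun_sum fun j _ =>
    ((hasFDerivAt_eval_euclidean (P j) x).differentiableAt.hasFDerivAt.smul_const (v j))).fderiv]
  simp

namespace IsPolynomialMap

theorem contDiff (hf : IsPolynomialMap f) {n : WithTop ℕ∞} : ContDiff ℝ n f := by
  obtain ⟨N, P, v, hf⟩ := hf
  rw [funext hf]
  exact ContDiff.sum fun j _ => (contDiff_eval_euclidean (P j)).smul contDiff_const

theorem differentiable (hf : IsPolynomialMap f) : Differentiable ℝ f :=
  hf.contDiff.differentiable (n := 1) one_ne_zero

theorem fderiv_apply_e (hf : IsPolynomialMap f) (i : Fin k) :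
    IsPolynomialMap (fun x => fderiv ℝ f x (e i)) := by
  obtain ⟨N, P, v, hf⟩ := hf
  refine ⟨N, fun j => pderiv i (P j), v, fun x => ?_⟩
  simp only [funext hf, fderiv_sum_eval_smul, fderiv_eval_euclidean_apply_e]

/- `L` here and `B` in `fderiv_bilinear` need not be continuous: this matters for the Clifford
algebra, whose norm comes from a Hamel basis and is not known to make multiplication continuous. -/
theorem fderiv_linearMap_comp (L : V →ₗ[ℝ] W) (hf : IsPolynomialMap f)
    (x w : EuclideanSpace ℝ (Fin k)) :
    fderiv ℝ (fun y => L (f y)) x w = L (fderiv ℝ f x w) := by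
  obtain ⟨N, P, v, hf⟩ := hf
  simp only [funext hf, map_sum, map_smul, fderiv_sum_eval_smul]

theorem fderiv_bilinear (B : EuclideanSpace ℝ (Fin k) →ₗ[ℝ] V →ₗ[ℝ] W) (hf : IsPolynomialMap f)
    (x w : EuclideanSpace ℝ (Fin k)) :
    fderiv ℝ (fun y => B y (f y)) x w = B w (f x) + B x (fderiv ℝ f x w) := by
  obtain ⟨N, P, v, hf⟩ := hf
  have hrepr : (fun y => B y (f y)) =
      fun y => ∑ j, eval (fun i => y i) (P j) • (B.flip (v j)).toContinuousLinearMap y := by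
    ext y
    simp [hf]
  have hderiv j :=
    (hasFDerivAt_eval_euclidean (P j) x).fun_smul (B.flip (v j)).toContinuousLinearMap.hasFDerivAt
  rw [hrepr, (HasFDerivAt.fun_sum fun j _ => hderiv j).fderiv]
  simp [funext hf, fderiv_sum_eval_smul, (hasFDerivAt_eval_euclidean _ x).fderiv,
    Finset.sum_add_distrib]

end IsPolynomialMap

end PolynomialMap

section Homogeneous

def IsPosHomogeneous {E F : Type*} [AddCommGroup E] [Module ℝ E] [AddCommGroup F] [Module ℝ F]
    (f : E → F) (d : ℕ) : Prop :=
  ∀ t : ℝ, 0 < t → ∀ x, f (t • x) = t ^ d • f x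

namespace IsPosHomogeneous

variable {E F : Type*} [NormedAddCommGroup E] [NormedSpace ℝ E] [NormedAddCommGroup F]
  [NormedSpace ℝ F] {f g : E → F} {d : ℕ}

theorem sub (hf : IsPosHomogeneous f d) (hg : IsPosHomogeneous g d) :
    IsPosHomogeneous (fun x => f x - g x) d := fun t ht x => by
  dsimp only
  rw [hf t ht, hg t ht, smul_sub]

theorem const_smul (hf : IsPosHomogeneous f d) (c : ℝ) :
    IsPosHomogeneous (fun x => c • f x) d := fun t ht x => by
  dsimp only
  rw [hf t ht, smul_comm]

theorem fderiv_apply_self (hf : IsPosHomogeneous f d) {x : E} (hfx : DifferentiableAt ℝ f x) :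
    fderiv ℝ f x x = (d : ℝ) • f x := by
  have hray : HasDerivAt (fun t : ℝ => f (t • x)) (fderiv ℝ f x x) 1 := by
    have hline : HasDerivAt (fun t : ℝ => t • x) x 1 := by
      simpa using (hasDerivAt_id (1 : ℝ)).smul_const x
    have hfx' : HasFDerivAt f (fderiv ℝ f x) ((1 : ℝ) • x) := by
      rw [one_smul]
      exact hfx.hasFDerivAt
    exact hfx'.comp_hasDerivAt 1 hline
  have hpow : HasDerivAt (fun t : ℝ => t ^ d • f x) ((d : ℝ) • f x) 1 := by
    simpa using (hasDerivAt_pow d (1 : ℝ)).smul_const (f x)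
  refine hray.unique (hpow.congr_of_eventuallyEq ?_)
  filter_upwards [lt_mem_nhds one_pos] with t ht using hf t ht x

theorem fderiv_apply (hf : IsPosHomogeneous f d) (hd : 1 ≤ d) (w : E) :
    IsPosHomogeneous (fun x => fderiv ℝ f x w) (d - 1) := fun t ht x => by
  have hscaled : t • fderiv ℝ f (t • x) = t ^ d • fderiv ℝ f x :=
    calc t • fderiv ℝ f (t • x) = fderiv ℝ (fun y => f (t • y)) x := (fderiv_comp_smul t).symm
      _ = fderiv ℝ (t ^ d • f) x := by rw [funext (hf t ht)]; rfl
      _ = t ^ d • fderiv ℝ f x := by rw [fderiv_const_smul_field]; rfl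
  have hw := congrArg (fun L : E →L[ℝ] F => t⁻¹ • L w) hscaled
  simp only [FunLike.coe_smul, Pi.smul_apply, smul_smul, inv_mul_cancel₀ ht.ne', one_smul] at hw
  dsimp only
  rw [hw, pow_sub₀ _ ht.ne' hd, pow_one, mul_comm]

end IsPosHomogeneous

end Homogeneous

theorem ContDiff.fderiv_fderiv_apply_comm {E F : Type*} [NormedAddCommGroup E] [NormedSpace ℝ E]
    [NormedAddCommGroup F] [NormedSpace ℝ F] {f : E → F} (hf : ContDiff ℝ 2 f) (x v w : E) :
    fderiv ℝ (fun y => fderiv ℝ f y v) x w = fderiv ℝ (fun y => fderiv ℝ f y w) x v := by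
  have hf' : DifferentiableAt ℝ (fderiv ℝ f) x :=
    (hf.fderiv_right (m := 1) le_rfl).differentiable one_ne_zero x
  simp only [fderiv_clm_apply hf' (differentiableAt_const _), fderiv_const_apply]
  simpa using hf.contDiffAt.isSymmSndFDerivAt (by simp) w v

theorem EuclideanSpace.sum_smul_e {k : ℕ} (x : EuclideanSpace ℝ (Fin k)) :
    ∑ i, x i • e i = x := by
  classical
  simpa [e] using (EuclideanSpace.basisFun (Fin k) ℝ).sum_repr x

theorem ContinuousLinearMap.sum_smul_apply_e {k : ℕ} {F : Type*} [NormedAddCommGroup F]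
    [NormedSpace ℝ F] (L : EuclideanSpace ℝ (Fin k) →L[ℝ] F) (x : EuclideanSpace ℝ (Fin k)) :
    ∑ i, x i • L (e i) = L x := by
  simp only [← map_smul, ← map_sum, EuclideanSpace.sum_smul_e]

section Dirac

variable {k : ℕ} {Q : QuadraticForm ℝ (EuclideanSpace ℝ (Fin k))}

theorem ι_eq_sum_smul_ι_e (x : EuclideanSpace ℝ (Fin k)) : ι Q x = ∑ i, x i • ι Q (e i) := by
  conv_lhs => rw [← EuclideanSpace.sum_smul_e x]
  simp

theorem ι_e_mul_ι_add_swap (hQ : ∀ x, Q x = -‖x‖ ^ 2) (i : Fin k)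
    (x : EuclideanSpace ℝ (Fin k)) :
    ι Q (e i) * ι Q x + ι Q x * ι Q (e i) = algebraMap ℝ _ (-2 * x i) := by
  rw [ι_mul_ι_add_swap, QuadraticMap.polar, hQ, hQ, hQ, norm_add_sq_real, e,
    EuclideanSpace.inner_single_left, map_one, one_mul]
  congr 1
  ring

theorem ι_e_mul_self (hQ : ∀ x, Q x = -‖x‖ ^ 2) (i : Fin k) : ι Q (e i) * ι Q (e i) = -1 := by
  rw [ι_sq_scalar, hQ, e, PiLp.norm_single]
  simp

theorem sum_ι_e_mul_ι_e_mul_of_symm (hQ : ∀ x, Q x = -‖x‖ ^ 2)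
    (S : Fin k → Fin k → CliffordAlgebra Q) (hS : ∀ i j, S i j = S j i) :
    ∑ i, ∑ j, ι Q (e i) * ι Q (e j) * S i j = -∑ i, S i i := by
  have htwice : (2 : ℝ) • ∑ i, ∑ j, ι Q (e i) * ι Q (e j) * S i j =
      ∑ i, ∑ j, (ι Q (e i) * ι Q (e j) + ι Q (e j) * ι Q (e i)) * S i j := by
    rw [two_smul]
    nth_rewrite 2 [Finset.sum_comm]
    rw [← Finset.sum_add_distrib]
    refine Finset.sum_congr rfl fun i _ => ?_
    rw [← Finset.sum_add_distrib]
    refine Finset.sum_congr rfl fun j _ => ?_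
    rw [hS j i, add_mul]
  have hdiag : ∑ i, ∑ j, (ι Q (e i) * ι Q (e j) + ι Q (e j) * ι Q (e i)) * S i j =
      (2 : ℝ) • -∑ i, S i i := by
    simp only [ι_e_mul_ι_add_swap hQ]
    simp [e, PiLp.single_apply, ← Algebra.smul_def, Finset.smul_sum]
  exact smul_right_injective _ two_ne_zero (htwice.trans hdiag)

variable (Q) in
def dirac (f : EuclideanSpace ℝ (Fin k) → CliffordAlgebra Q) (x : EuclideanSpace ℝ (Fin k)) :
    CliffordAlgebra Q :=
  ∑ i, ι Q (e i) * fderiv ℝ f x (e i)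

variable (Q) in
def IsLeftMonogenic (f : EuclideanSpace ℝ (Fin k) → CliffordAlgebra Q) : Prop :=
  ∀ x, dirac Q f x = 0

variable {f g : EuclideanSpace ℝ (Fin k) → CliffordAlgebra Q}

theorem dirac_sub {x : EuclideanSpace ℝ (Fin k)} (hf : DifferentiableAt ℝ f x)
    (hg : DifferentiableAt ℝ g x) :
    dirac Q (fun y => f y - g y) x = dirac Q f x - dirac Q g x := by
  have hsub i :
      fderiv ℝ (fun y => f y - g y) x (e i) = fderiv ℝ f x (e i) - fderiv ℝ g x (e i) :=
    DFunLike.congr_fun (fderiv_fun_sub hf hg) (e i)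
  simp only [dirac, hsub, mul_sub, Finset.sum_sub_distrib]

theorem isPosHomogeneous_dirac {d : ℕ} (hf : IsPosHomogeneous f d) (hd : 1 ≤ d) :
    IsPosHomogeneous (dirac Q f) (d - 1) := fun t ht x => by
  have hderiv i : fderiv ℝ f (t • x) (e i) = t ^ (d - 1) • fderiv ℝ f x (e i) :=
    hf.fderiv_apply hd (e i) t ht x
  simp only [dirac, hderiv, mul_smul_comm, Finset.smul_sum]

theorem IsPosHomogeneous.ι_mul {d : ℕ} (hf : IsPosHomogeneous f d) :
    IsPosHomogeneous (fun x => ι Q x * f x) (d + 1) := fun t ht x => by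
  dsimp only
  rw [hf t ht, map_smul, smul_mul_smul_comm, pow_succ']

theorem isPolynomialMap_dirac (hf : IsPolynomialMap f) : IsPolynomialMap (dirac Q f) :=
  .sum _ fun i _ => (hf.fderiv_apply_e i).linearMap_comp (LinearMap.mulLeft ℝ (ι Q (e i)))

namespace IsPolynomialMap

theorem ι_mul (hf : IsPolynomialMap f) : IsPolynomialMap (fun x => ι Q x * f x) := by
  have hsum : (fun x => ι Q x * f x) = fun x => ∑ i, x i • (ι Q (e i) * f x) := by
    ext x
    rw [ι_eq_sum_smul_ι_e, Finset.sum_mul]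
    simp only [smul_mul_assoc]
  rw [hsum]
  exact sum _ fun i _ => (hf.linearMap_comp (LinearMap.mulLeft ℝ (ι Q (e i)))).coord_smul i

theorem dirac_const_smul (hf : IsPolynomialMap f) (c : ℝ) (x : EuclideanSpace ℝ (Fin k)) :
    dirac Q (fun y => c • f y) x = c • dirac Q f x := by
  have hsmul i : fderiv ℝ (fun y => c • f y) x (e i) = c • fderiv ℝ f x (e i) :=
    hf.fderiv_linearMap_comp (LinearMap.lsmul ℝ _ c) x (e i)
  simp only [dirac, hsmul, mul_smul_comm, Finset.smul_sum]

theorem fderiv_ι_mul (hf : IsPolynomialMap f) (x w : EuclideanSpace ℝ (Fin k)) :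
    fderiv ℝ (fun y => ι Q y * f y) x w = ι Q w * f x + ι Q x * fderiv ℝ f x w :=
  let B : EuclideanSpace ℝ (Fin k) →ₗ[ℝ] CliffordAlgebra Q →ₗ[ℝ] CliffordAlgebra Q :=
    LinearMap.mul ℝ _ ∘ₗ ι Q
  hf.fderiv_bilinear B x w

theorem dirac_ι_mul (hQ : ∀ x, Q x = -‖x‖ ^ 2) (hf : IsPolynomialMap f) {d : ℕ}
    (hhom : IsPosHomogeneous f d) (x : EuclideanSpace ℝ (Fin k)) :
    dirac Q (fun y => ι Q y * f y) x = -((k : ℝ) + 2 * d) • f x - ι Q x * dirac Q f x := by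
  have heuler : ∑ i, x i • fderiv ℝ f x (e i) = (d : ℝ) • f x := by
    have hlin : ∑ i, x i • fderiv ℝ f x (e i) = fderiv ℝ f x x :=
      (fderiv ℝ f x).sum_smul_apply_e x
    rw [hlin]
    exact hhom.fderiv_apply_self (hf.differentiable x)
  have hterm i : ι Q (e i) * fderiv ℝ (fun y => ι Q y * f y) x (e i) =
      -f x + (-2 * x i) • fderiv ℝ f x (e i) - ι Q x * (ι Q (e i) * fderiv ℝ f x (e i)) := by
    rw [hf.fderiv_ι_mul, mul_add, ← mul_assoc, ← mul_assoc, ι_e_mul_self hQ,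
      eq_sub_of_add_eq (ι_e_mul_ι_add_swap hQ i x), sub_mul, ← Algebra.smul_def, mul_assoc,
      neg_one_mul, add_sub_assoc]
  simp only [dirac, hterm, Finset.sum_sub_distrib, Finset.sum_add_distrib, ← Finset.mul_sum,
    mul_smul, ← Finset.smul_sum, heuler, Finset.sum_neg_distrib, Finset.sum_const,
    Finset.card_univ, Fintype.card_fin]
  module

theorem dirac_dirac (hQ : ∀ x, Q x = -‖x‖ ^ 2) (hf : IsPolynomialMap f)
    (x : EuclideanSpace ℝ (Fin k)) :
    dirac Q (dirac Q f) x = -∑ i, fderiv ℝ (fun y => fderiv ℝ f y (e i)) x (e i) := by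
  have hterm j : IsPolynomialMap (fun y => ι Q (e j) * fderiv ℝ f y (e j)) :=
    (hf.fderiv_apply_e j).linearMap_comp (LinearMap.mulLeft ℝ (ι Q (e j)))
  have hsum i : fderiv ℝ (dirac Q f) x (e i) =
      ∑ j, fderiv ℝ (fun y => ι Q (e j) * fderiv ℝ f y (e j)) x (e i) := by
    have := fderiv_fun_sum (u := Finset.univ) fun j _ => (hterm j).differentiable x
    exact (DFunLike.congr_fun this (e i)).trans (sum_apply _ _ _)
  have hcomm i j : fderiv ℝ (fun y => ι Q (e j) * fderiv ℝ f y (e j)) x (e i) =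
      ι Q (e j) * fderiv ℝ (fun y => fderiv ℝ f y (e j)) x (e i) :=
    (hf.fderiv_apply_e j).fderiv_linearMap_comp (LinearMap.mulLeft ℝ (ι Q (e j))) x (e i)
  simp only [dirac, hsum, hcomm, Finset.mul_sum, ← mul_assoc]
  exact sum_ι_e_mul_ι_e_mul_of_symm hQ _ fun i j => hf.contDiff.fderiv_fderiv_apply_comm x _ _

end IsPolynomialMap

end Dirac

section Decomposition

variable {n : ℕ} {Q : QuadraticForm ℝ (EuclideanSpace ℝ (Fin (n + 1)))}

theorem IsPolynomialMap.eq_zero_of_isLeftMonogenic_ι_mul (hQ : ∀ x, Q x = -‖x‖ ^ 2)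
    {r : EuclideanSpace ℝ (Fin (n + 1)) → CliffordAlgebra Q} (hr : IsPolynomialMap r) {d : ℕ}
    (hhom : IsPosHomogeneous r d) (hmono : IsLeftMonogenic Q r)
    (hι : IsLeftMonogenic Q (fun y => ι Q y * r y)) : r = 0 := by
  funext x
  have hx := hr.dirac_ι_mul hQ hhom x
  rw [hι, hmono, mul_zero, sub_zero, eq_comm, smul_eq_zero] at hx
  exact hx.resolve_left (neg_ne_zero.mpr (by positivity))

theorem IsPolynomialMap.eq_of_add_ι_mul_eq (hQ : ∀ x, Q x = -‖x‖ ^ 2)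
    {p p' q q' : EuclideanSpace ℝ (Fin (n + 1)) → CliffordAlgebra Q} {d : ℕ}
    (hp : IsPolynomialMap p) (hp' : IsPolynomialMap p') (hq : IsPolynomialMap q)
    (hq' : IsPolynomialMap q') (hq_hom : IsPosHomogeneous q d) (hq'_hom : IsPosHomogeneous q' d)
    (hp_mono : IsLeftMonogenic Q p) (hp'_mono : IsLeftMonogenic Q p')
    (hq_mono : IsLeftMonogenic Q q) (hq'_mono : IsLeftMonogenic Q q')
    (heq : ∀ x, p x + ι Q x * q x = p' x + ι Q x * q' x) : p = p' ∧ q = q' := by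
  have hιr : (fun y => ι Q y * (q y - q' y)) = fun y => p' y - p y := by
    funext y
    rw [mul_sub, sub_eq_sub_iff_add_eq_add, add_comm (ι Q y * q y)]
    exact heq y
  have hr : (fun x => q x - q' x) = 0 :=
    (hq.sub hq').eq_zero_of_isLeftMonogenic_ι_mul hQ (hq_hom.sub hq'_hom)
      (fun x => by rw [dirac_sub (hq.differentiable x) (hq'.differentiable x), hq_mono x,
        hq'_mono x, sub_self])
      (fun x => by rw [hιr, dirac_sub (hp'.differentiable x) (hp.differentiable x), hp'_mono x,
        hp_mono x, sub_self])
  obtain rfl : q = q' := funext fun x => sub_eq_zero.mp (congrFun hr x)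
  exact ⟨funext fun x => add_right_cancel (heq x), rfl⟩

end Decomposition

theorem harmonic_decomposition_general (n : ℕ)
    (Q : QuadraticForm ℝ (EuclideanSpace ℝ (Fin (n + 1))))
    (hQ : ∀ x, Q x = -‖x‖ ^ 2)
    (m : ℕ) (hm : 1 ≤ m)
    (h : EuclideanSpace ℝ (Fin (n + 1)) → CliffordAlgebra Q)
    (h_poly : IsPolynomialMap h)
    (h_hom : ∀ t : ℝ, 0 < t → ∀ x, h (t • x) = t ^ m • h x)
    (h_harm : ∀ x, ∑ i, fderiv ℝ (fun y => fderiv ℝ h y (e i)) x (e i) = 0) :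
    ∃! pq : (EuclideanSpace ℝ (Fin (n + 1)) → CliffordAlgebra Q) ×
        (EuclideanSpace ℝ (Fin (n + 1)) → CliffordAlgebra Q),
      IsPolynomialMap pq.1 ∧ IsPolynomialMap pq.2 ∧
      (∀ t : ℝ, 0 < t → ∀ x, pq.1 (t • x) = t ^ m • pq.1 x) ∧
      (∀ t : ℝ, 0 < t → ∀ x, pq.2 (t • x) = t ^ (m - 1) • pq.2 x) ∧
      (∀ x, ∑ i, CliffordAlgebra.ι Q (e i) * fderiv ℝ pq.1 x (e i) = 0) ∧
      (∀ x, ∑ i, CliffordAlgebra.ι Q (e i) * fderiv ℝ pq.2 x (e i) = 0) ∧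
      (∀ x, h x = pq.1 x + CliffordAlgebra.ι Q x * pq.2 x) := by
  have h_hom : IsPosHomogeneous h m := h_hom
  set c : ℝ := ((n + 1 : ℕ) : ℝ) + 2 * (m - 1 : ℕ)
  have hc : c ≠ 0 := by positivity
  set q := fun x => (-c⁻¹) • dirac Q h x
  have hq_poly : IsPolynomialMap q := (isPolynomialMap_dirac h_poly).const_smul _
  have hq_hom : IsPosHomogeneous q (m - 1) := (isPosHomogeneous_dirac h_hom hm).const_smul _
  have hq_mono : IsLeftMonogenic Q q := fun x => by
    rw [(isPolynomialMap_dirac h_poly).dirac_const_smul, h_poly.dirac_dirac hQ, h_harm, neg_zero,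
      smul_zero]
  set p := fun x => h x - ι Q x * q x
  have hp_poly : IsPolynomialMap p := h_poly.sub hq_poly.ι_mul
  have hp_mono : IsLeftMonogenic Q p := fun x => by
    rw [dirac_sub (h_poly.differentiable x) (hq_poly.ι_mul.differentiable x),
      hq_poly.dirac_ι_mul hQ hq_hom, hq_mono, mul_zero, sub_zero, smul_smul, neg_mul_neg,
      mul_inv_cancel₀ hc, one_smul, sub_self]
  refine ⟨(p, q), ⟨hp_poly, hq_poly, ?_, hq_hom, hp_mono, hq_mono, fun x => by simp [p]⟩, ?_⟩
  · exact h_hom.sub (Nat.sub_add_cancel hm ▸ hq_hom.ι_mul)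
  rintro ⟨p', q'⟩ ⟨hp'_poly, hq'_poly, -, hq'_hom, hp'_mono, hq'_mono, hdecomp⟩
  obtain ⟨rfl, rfl⟩ := hp'_poly.eq_of_add_ι_mul_eq hQ hp_poly hq'_poly hq_poly hq'_hom hq_hom
    hp'_mono hp_mono hq'_mono hq_mono fun x => by simp [p, ← hdecomp x]
  rfl

/-- Every harmonic polynomial map `h` into the Clifford algebra that is
homogeneous of degree `m ≥ 1` decomposes uniquely as `h x = p x + ι x * q x` with `p`, `q`
left monogenic polynomial maps, homogeneous of degrees `m` and `m - 1` respectively. -/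
theorem harmonic_decomposition (n : ℕ) (hn : 1 ≤ n)
    (Q : QuadraticForm ℝ (EuclideanSpace ℝ (Fin (n + 1))))
    (hQ : ∀ x, Q x = -‖x‖ ^ 2)
    (m : ℕ) (hm : 1 ≤ m)
    (h : EuclideanSpace ℝ (Fin (n + 1)) → CliffordAlgebra Q)
    (h_poly : IsPolynomialMap h)
    (h_hom : ∀ t : ℝ, 0 < t → ∀ x, h (t • x) = t ^ m • h x)
    (h_harm : ∀ x, ∑ i, fderiv ℝ (fun y => fderiv ℝ h y (e i)) x (e i) = 0) :
    ∃! pq : (EuclideanSpace ℝ (Fin (n + 1)) → CliffordAlgebra Q) ×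
        (EuclideanSpace ℝ (Fin (n + 1)) → CliffordAlgebra Q),
      IsPolynomialMap pq.1 ∧ IsPolynomialMap pq.2 ∧
      (∀ t : ℝ, 0 < t → ∀ x, pq.1 (t • x) = t ^ m • pq.1 x) ∧
      (∀ t : ℝ, 0 < t → ∀ x, pq.2 (t • x) = t ^ (m - 1) • pq.2 x) ∧
      (∀ x, ∑ i, CliffordAlgebra.ι Q (e i) * fderiv ℝ pq.1 x (e i) = 0) ∧
      (∀ x, ∑ i, CliffordAlgebra.ι Q (e i) * fderiv ℝ pq.2 x (e i) = 0) ∧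
      (∀ x, h x = pq.1 x + CliffordAlgebra.ι Q x * pq.2 x) :=
  harmonic_decomposition_general n Q hQ m hm h h_poly h_hom h_harm
end
end

section
/- Let n ≥ 1, define N(n,m) = 2^{⌊(n+1)/2⌋+1} · (2m + n − 1) · (m + n − 2)! / ((n − 1)! · m!) for m ≥ 1, and let s > n/2 be real. Then there exist positive constants c₃, c₄ independent of a such that for all a ≥ 1, c₃ · (a + (n−1)/2)^{n−2s} ≤ ∑_{m=a+1}^∞ N(n,m) / (m + (n−1)/2)^{2s} ≤ c₄ · (a + (n−1)/2)^{n−2s}. -/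
open Real Filter Finset

/-- The dimension `N(n,m) = 2^{⌊(n+1)/2⌋+1} (2m+n-1)(m+n-2)!/((n-1)! m!)` of the space of
`Cl_{n+1}`-valued spherical harmonics homogeneous of degree `m ≥ 1`, as a real number. -/
noncomputable def Nf (n m : ℕ) : ℝ :=
  (2 : ℝ) ^ ((n + 1) / 2 + 1) * ((2 * m + n - 1 : ℕ) : ℝ) *
    (Nat.factorial (m + n - 2) : ℝ) /
    ((Nat.factorial (n - 1) : ℝ) * (Nat.factorial m : ℝ))

lemma step_bound {p y : ℝ} (hp : 1 < p) (hy : 0 < y) :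
    (p - 1) * (y + 1) ^ (-p) ≤ y ^ (1 - p) - (y + 1) ^ (1 - p) ∧
      y ^ (1 - p) - (y + 1) ^ (1 - p) ≤ (p - 1) * y ^ (-p) := by
  have hy1 : (0:ℝ) < y + 1 := by linarith
  have hcont : ContinuousOn (fun x : ℝ => x ^ (1 - p)) (Set.Icc y (y + 1)) := by
    apply ContinuousOn.rpow_const continuousOn_id
    intro x hx
    exact Or.inl (ne_of_gt (show (0:ℝ) < id x by have := hx.1; simp only [id_eq]; nlinarith))
  have hderiv : ∀ x ∈ Set.Ioo y (y + 1),
      HasDerivAt (fun x : ℝ => x ^ (1 - p)) ((1 - p) * x ^ (-p)) x := by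
    intro x hx
    have hx0 : x ≠ 0 := by have := hx.1; nlinarith
    have h := Real.hasDerivAt_rpow_const (p := 1 - p) (Or.inl hx0)
    have he : (1 : ℝ) - p - 1 = -p := by ring
    rwa [he] at h
  obtain ⟨ξ, hξ, hslope⟩ :=
    exists_hasDerivAt_eq_slope (fun x : ℝ => x ^ (1 - p)) _
      (by linarith : y < y + 1) hcont hderiv
  have hξ0 : 0 < ξ := lt_trans hy hξ.1
  have heq : y ^ (1 - p) - (y + 1) ^ (1 - p) = (p - 1) * ξ ^ (-p) := by
    have h1 : (y + 1 : ℝ) - y = 1 := by ring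
    rw [h1, div_one] at hslope
    nlinarith [hslope]
  constructor
  · rw [heq]
    have := Real.rpow_le_rpow_of_nonpos hξ0 hξ.2.le (by linarith : -p ≤ 0)
    nlinarith
  · rw [heq]
    have := Real.rpow_le_rpow_of_nonpos hy hξ.1.le (by linarith : -p ≤ 0)
    nlinarith

lemma tele {p c : ℝ} (hp : 1 < p) (hc : 0 < c) :
    HasSum (fun m : ℕ => (c + m) ^ (1 - p) - (c + m + 1) ^ (1 - p)) (c ^ (1 - p)) := by
  have hpos : ∀ m : ℕ, (0:ℝ) < c + m := fun m => by positivity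
  have hnn : ∀ m : ℕ, 0 ≤ (c + m) ^ (1 - p) - (c + m + 1) ^ (1 - p) := fun m =>
    sub_nonneg.2 (Real.rpow_le_rpow_of_nonpos (hpos m) (by linarith) (by linarith))
  rw [hasSum_iff_tendsto_nat_of_nonneg hnn]
  have key : ∀ N : ℕ, ∑ i ∈ Finset.range N,
      ((c + i) ^ (1 - p) - (c + i + 1) ^ (1 - p)) = c ^ (1 - p) - (c + N) ^ (1 - p) := by
    intro N
    have h := Finset.sum_range_sub' (fun i : ℕ => (c + i) ^ (1 - p)) N
    simp only [Nat.cast_add, Nat.cast_one, Nat.cast_zero] at h ⊢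
    convert h using 2 with i
    · ring_nf
    · norm_num
  simp only [key]
  have h0 : Tendsto (fun N : ℕ => (c + N) ^ (1 - p)) atTop (nhds 0) := by
    have h1 : Tendsto (fun N : ℕ => c + (N:ℝ)) atTop atTop :=
      tendsto_atTop_add_const_left _ c tendsto_natCast_atTop_atTop
    have h2 := (tendsto_rpow_neg_atTop (by linarith : (0:ℝ) < p - 1)).comp h1
    have he : -(p-1) = 1 - p := by ring
    rwa [he] at h2
  have := tendsto_const_nhds (x := c ^ (1 - p)) (f := atTop (α := ℕ)) |>.sub h0
  simpa using this

lemma tail_bounds {p c : ℝ} (hp : 1 < p) (hc : 1 ≤ c) :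
    Summable (fun m : ℕ => (c + 1 + (m:ℝ)) ^ (-p)) ∧
    (c + 1) ^ (1 - p) / (p - 1) ≤ (∑' m : ℕ, (c + 1 + (m:ℝ)) ^ (-p)) ∧
    (∑' m : ℕ, (c + 1 + (m:ℝ)) ^ (-p)) ≤ c ^ (1 - p) / (p - 1) := by
  have hc0 : (0:ℝ) < c := by linarith
  have hc10 : (0:ℝ) < c + 1 := by linarith
  have hp1 : (0:ℝ) < p - 1 := by linarith
  have h1 := tele hp hc0
  have h2 := tele hp hc10
  -- upper per-term bound
  have hle : ∀ m : ℕ, (c + 1 + (m:ℝ)) ^ (-p) ≤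
      (1 / (p - 1)) * ((c + m) ^ (1 - p) - (c + m + 1) ^ (1 - p)) := by
    intro m
    have hy : (0:ℝ) < c + m := by positivity
    have h := (step_bound hp hy).1
    have harg : c + 1 + (m:ℝ) = c + m + 1 := by ring
    rw [harg]
    rw [← sub_nonneg] at h ⊢
    calc (0:ℝ) ≤ (1/(p-1)) * ((c + m) ^ (1 - p) - (c + m + 1) ^ (1 - p)
          - (p - 1) * (c + ↑m + 1) ^ (-p)) := by positivity
      _ = 1 / (p - 1) * ((c + ↑m) ^ (1 - p) - (c + ↑m + 1) ^ (1 - p)) - (c + ↑m + 1) ^ (-p) := by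
          field_simp
  have hnn : ∀ m : ℕ, (0:ℝ) ≤ (c + 1 + (m:ℝ)) ^ (-p) := fun m => by positivity
  have hsum2 : Summable (fun m : ℕ =>
      (1 / (p - 1)) * ((c + m) ^ (1 - p) - (c + m + 1) ^ (1 - p))) :=
    h1.summable.mul_left _
  have hsummable : Summable (fun m : ℕ => (c + 1 + (m:ℝ)) ^ (-p)) :=
    Summable.of_nonneg_of_le hnn hle hsum2
  refine ⟨hsummable, ?_, ?_⟩
  · -- lower bound
    have hge : ∀ m : ℕ, (c + 1 + (m:ℝ)) ^ (1 - p) - (c + 1 + m + 1) ^ (1 - p) ≤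
        (p - 1) * (c + 1 + (m:ℝ)) ^ (-p) := by
      intro m
      have hy : (0:ℝ) < c + 1 + m := by positivity
      exact (step_bound hp hy).2
    have := Summable.tsum_le_tsum hge h2.summable (hsummable.mul_left (p - 1))
    rw [h2.tsum_eq, tsum_mul_left] at this
    rw [div_le_iff₀ hp1]
    linarith [this]
  · have := Summable.tsum_le_tsum hle hsummable hsum2
    rw [tsum_mul_left, h1.tsum_eq] at this
    rw [div_eq_inv_mul, ← one_div]
    exact this

lemma fact_bounds (m : ℕ) : ∀ j : ℕ,
    m.factorial * (m + 1) ^ j ≤ (m + j).factorial ∧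
    (m + j).factorial ≤ m.factorial * (m + j) ^ j := by
  intro j
  induction j with
  | zero => simp
  | succ j ih =>
    obtain ⟨ih1, ih2⟩ := ih
    have hfs : (m + (j + 1)).factorial = (m + j + 1) * (m + j).factorial := by
      have : m + (j + 1) = (m + j) + 1 := by omega
      rw [this, Nat.factorial_succ]
    constructor
    · rw [hfs, pow_succ]
      calc m.factorial * ((m + 1) ^ j * (m + 1))
          = (m + 1) * (m.factorial * (m + 1) ^ j) := by ring
        _ ≤ (m + j + 1) * (m + j).factorial :=
            Nat.mul_le_mul (by omega) ih1
    · rw [hfs, pow_succ]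
      calc (m + j + 1) * (m + j).factorial
          ≤ (m + j + 1) * (m.factorial * (m + j) ^ j) := Nat.mul_le_mul_left _ ih2
        _ ≤ (m + (j+1)) * (m.factorial * (m + (j+1)) ^ j) :=
            Nat.mul_le_mul (by omega) (Nat.mul_le_mul_left _
              (Nat.pow_le_pow_left (by omega) j))
        _ = m.factorial * ((m + (j + 1)) ^ j * (m + (j + 1))) := by ring

lemma Nf_bounds (n : ℕ) (hn : 1 ≤ n) :
    ∃ k₁ k₂ : ℝ, 0 < k₁ ∧ 0 < k₂ ∧ ∀ m : ℕ, 1 ≤ m →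
      k₁ * ((m:ℝ) + ((n:ℝ) - 1) / 2) ^ ((n:ℝ) - 1) ≤ Nf n m ∧
      Nf n m ≤ k₂ * ((m:ℝ) + ((n:ℝ) - 1) / 2) ^ ((n:ℝ) - 1) := by
  rcases eq_or_lt_of_le hn with h1 | h2
  · -- n = 1
    refine ⟨8, 8, by norm_num, by norm_num, ?_⟩
    intro m hm
    obtain ⟨k, rfl⟩ : ∃ k, m = k + 1 := ⟨m - 1, by omega⟩
    subst h1
    have hNf : Nf 1 (k + 1) = 8 := by
      have h2 : 2 * (k + 1) + 1 - 1 = 2 * (k + 1) := by omega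
      have h3 : k + 1 + 1 - 2 = k := by omega
      have h4 : (1:ℕ) - 1 = 0 := by omega
      simp only [Nf, h2, h3, h4, Nat.factorial_zero, Nat.factorial_succ]
      have hk : ((k.factorial : ℝ)) ≠ 0 := Nat.cast_ne_zero.2 k.factorial_ne_zero
      have hk1 : ((k:ℝ) + 1) ≠ 0 := by positivity
      push_cast
      field_simp
      ring
    rw [hNf]
    norm_num
  · -- n ≥ 2
    set j := n - 2 with hj
    set e := (n + 1) / 2 + 1 with he
    set C : ℝ := 2 * (2:ℝ) ^ e / (Nat.factorial (n - 1) : ℝ) with hC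
    have hfpos : (0:ℝ) < (Nat.factorial (n-1) : ℝ) := by
      exact_mod_cast Nat.factorial_pos _
    have hCpos : 0 < C := by positivity
    have hnR : (1:ℝ) ≤ (n:ℝ) := by exact_mod_cast hn
    have hn2R : (2:ℝ) ≤ (n:ℝ) := by exact_mod_cast h2
    refine ⟨C / (n:ℝ) ^ j, C * 2 ^ j, by positivity, by positivity, ?_⟩
    intro m hm
    set x : ℝ := (m:ℝ) + ((n:ℝ) - 1) / 2 with hx
    have hmR : (1:ℝ) ≤ (m:ℝ) := by exact_mod_cast hm
    have hxpos : 0 < x := by rw [hx]; nlinarith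
    -- rewrite Nf
    have e1 : ((2 * m + n - 1 : ℕ) : ℝ) = 2 * x := by
      have : (2 * m + n - 1 : ℕ) = 2 * m + (n - 1) := by omega
      rw [this]
      push_cast [Nat.cast_sub hn]
      rw [hx]; ring
    have e2 : m + n - 2 = m + j := by omega
    have hmf : (0:ℝ) < (Nat.factorial m : ℝ) := by exact_mod_cast Nat.factorial_pos _
    have hNf : Nf n m = C * x * ((Nat.factorial (m + j) : ℝ) / (Nat.factorial m : ℝ)) := by
      simp only [Nf, e1, e2, ← he, hC]
      rw [div_mul_eq_mul_div, mul_div_assoc, div_mul_eq_mul_div, mul_div_assoc, div_div]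
      ring
    -- bounds on the factorial ratio
    obtain ⟨hf1, hf2⟩ := fact_bounds m j
    have hr1 : ((m:ℝ) + 1) ^ j ≤ (Nat.factorial (m + j) : ℝ) / (Nat.factorial m : ℝ) := by
      rw [le_div_iff₀ hmf]
      calc ((m:ℝ) + 1) ^ j * (Nat.factorial m : ℝ)
          = ((Nat.factorial m * (m + 1) ^ j : ℕ) : ℝ) := by push_cast; ring
        _ ≤ ((Nat.factorial (m + j) : ℕ) : ℝ) := by exact_mod_cast hf1
    have hr2 : (Nat.factorial (m + j) : ℝ) / (Nat.factorial m : ℝ) ≤ ((m:ℝ) + j) ^ j := by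
      rw [div_le_iff₀ hmf]
      calc ((Nat.factorial (m + j) : ℕ) : ℝ)
          ≤ ((Nat.factorial m * (m + j) ^ j : ℕ) : ℝ) := by exact_mod_cast hf2
        _ = ((m:ℝ) + j) ^ j * (Nat.factorial m : ℝ) := by push_cast; ring
    -- relate x powers
    have hjR : ((j:ℕ) : ℝ) = (n:ℝ) - 2 := by
      rw [hj, Nat.cast_sub h2]; norm_num
    have hxr : x ^ ((n:ℝ) - 1) = x ^ (j + 1) := by
      rw [← Real.rpow_natCast x (j + 1)]
      congr 1
      push_cast [hjR]
      ring
    have hxn : x / (n:ℝ) ≤ (m:ℝ) + 1 := by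
      rw [div_le_iff₀ (by linarith : (0:ℝ) < (n:ℝ))]
      rw [hx]; nlinarith
    have hmj : (m:ℝ) + j ≤ 2 * x := by
      rw [hjR, hx]; nlinarith
    constructor
    · rw [hNf, hxr]
      have hb : (x / n) ^ j ≤ (Nat.factorial (m + j) : ℝ) / (Nat.factorial m : ℝ) :=
        le_trans (pow_le_pow_left₀ (by positivity) hxn j) hr1
      calc C / (n:ℝ) ^ j * x ^ (j + 1)
          = C * x * (x / n) ^ j := by
            rw [div_pow]; field_simp; ring
        _ ≤ C * x * ((Nat.factorial (m + j) : ℝ) / (Nat.factorial m : ℝ)) := by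
            apply mul_le_mul_of_nonneg_left hb (by positivity)
    · rw [hNf, hxr]
      have hb : (Nat.factorial (m + j) : ℝ) / (Nat.factorial m : ℝ) ≤ (2 * x) ^ j :=
        le_trans hr2 (pow_le_pow_left₀ (by positivity) hmj j)
      calc C * x * ((Nat.factorial (m + j) : ℝ) / (Nat.factorial m : ℝ))
          ≤ C * x * (2 * x) ^ j := by
            apply mul_le_mul_of_nonneg_left hb (by positivity)
        _ = C * 2 ^ j * x ^ (j + 1) := by rw [mul_pow]; ring

/-- Two-sided tail estimate: for `s > n/2`, the tail
`∑_{m>a} N(n,m)/(m + (n-1)/2)^{2s}` is comparable to `(a + (n-1)/2)^{n-2s}`,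
uniformly in `a ≥ 1`. -/
theorem Nf_tail_estimate (n : ℕ) (hn : 1 ≤ n) (s : ℝ) (hs : (n : ℝ) / 2 < s) :
    ∃ c₃ c₄ : ℝ, 0 < c₃ ∧ 0 < c₄ ∧ ∀ a : ℕ, 1 ≤ a →
      c₃ * ((a : ℝ) + ((n : ℝ) - 1) / 2) ^ ((n : ℝ) - 2 * s) ≤
        (∑' m : ℕ, Nf n (a + 1 + m) /
          (((a + 1 + m : ℕ) : ℝ) + ((n : ℝ) - 1) / 2) ^ (2 * s)) ∧
      (∑' m : ℕ, Nf n (a + 1 + m) /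
          (((a + 1 + m : ℕ) : ℝ) + ((n : ℝ) - 1) / 2) ^ (2 * s)) ≤
        c₄ * ((a : ℝ) + ((n : ℝ) - 1) / 2) ^ ((n : ℝ) - 2 * s) := by
  obtain ⟨k₁, k₂, hk₁, hk₂, hbd⟩ := Nf_bounds n hn
  have hnR : (1:ℝ) ≤ (n:ℝ) := by exact_mod_cast hn
  set p : ℝ := 2 * s - ((n:ℝ) - 1) with hpdef
  have hp : 1 < p := by rw [hpdef]; linarith
  have hp1 : (0:ℝ) < p - 1 := by linarith
  refine ⟨k₁ * (2:ℝ) ^ ((1:ℝ) - p) / (p - 1), k₂ / (p - 1),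
    by positivity, by positivity, ?_⟩
  intro a ha
  have haR : (1:ℝ) ≤ (a:ℝ) := by exact_mod_cast ha
  set t : ℝ := ((n:ℝ) - 1) / 2 with htdef
  have ht : 0 ≤ t := by rw [htdef]; linarith
  set c : ℝ := (a:ℝ) + t with hcdef
  have hc1 : 1 ≤ c := by rw [hcdef]; linarith
  obtain ⟨hsummable, hlow, hup⟩ := tail_bounds hp hc1
  -- pointwise facts about the terms
  have hxeq : ∀ m : ℕ, (((a + 1 + m : ℕ) : ℝ) + t) = c + 1 + (m:ℝ) := by
    intro m; push_cast; rw [hcdef]; ring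
  have hxpos : ∀ m : ℕ, (0:ℝ) < c + 1 + (m:ℝ) := fun m => by positivity
  have hterm : ∀ m : ℕ,
      k₁ * (c + 1 + (m:ℝ)) ^ (-p) ≤
        Nf n (a + 1 + m) / (((a + 1 + m : ℕ) : ℝ) + t) ^ (2 * s) ∧
      Nf n (a + 1 + m) / (((a + 1 + m : ℕ) : ℝ) + t) ^ (2 * s) ≤
        k₂ * (c + 1 + (m:ℝ)) ^ (-p) := by
    intro m
    have h1 : 1 ≤ a + 1 + m := by omega
    obtain ⟨hb1, hb2⟩ := hbd (a + 1 + m) h1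
    rw [show (((a+1+m : ℕ):ℝ)) = ((a:ℝ) + 1 + m) by push_cast; ring] at hb1 hb2 ⊢
    have hxe : (a:ℝ) + 1 + (m:ℝ) + t = c + 1 + (m:ℝ) := by rw [hcdef]; ring
    rw [hxe] at hb1 hb2
    have hpow : (0:ℝ) < (c + 1 + (m:ℝ)) ^ (2 * s) := rpow_pos_of_pos (hxpos m) _
    have hkey : ∀ k : ℝ, k * (c + 1 + (m:ℝ)) ^ ((n:ℝ) - 1) / (c + 1 + (m:ℝ)) ^ (2 * s)
        = k * (c + 1 + (m:ℝ)) ^ (-p) := by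
      intro k
      rw [mul_div_assoc, ← Real.rpow_sub (hxpos m)]
      congr 2
      rw [hpdef]; ring
    constructor
    · rw [hxe, ← hkey k₁]
      exact div_le_div_of_nonneg_right hb1 hpow.le
    · rw [hxe, ← hkey k₂]
      exact div_le_div_of_nonneg_right hb2 hpow.le
  have hnn : ∀ m : ℕ, (0:ℝ) ≤
      Nf n (a + 1 + m) / (((a + 1 + m : ℕ) : ℝ) + t) ^ (2 * s) := by
    intro m
    refine le_trans ?_ (hterm m).1
    positivity
  have hTsummable : Summable (fun m : ℕ =>
      Nf n (a + 1 + m) / (((a + 1 + m : ℕ) : ℝ) + t) ^ (2 * s)) :=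
    Summable.of_nonneg_of_le hnn (fun m => (hterm m).2) (hsummable.mul_left k₂)
  have h1p : (1:ℝ) - p = (n:ℝ) - 2 * s := by rw [hpdef]; ring
  have hcpos : (0:ℝ) < c := by linarith
  constructor
  · -- lower bound
    have hA := Summable.tsum_le_tsum (fun m => (hterm m).1) (hsummable.mul_left k₁) hTsummable
    rw [tsum_mul_left] at hA
    have hB : (2 * c) ^ ((1:ℝ) - p) ≤ (c + 1) ^ ((1:ℝ) - p) :=
      Real.rpow_le_rpow_of_nonpos (by linarith) (by linarith) (by linarith)
    have hC : (2 * c) ^ ((1:ℝ) - p) = (2:ℝ) ^ ((1:ℝ) - p) * c ^ ((1:ℝ) - p) :=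
      Real.mul_rpow (by norm_num) (by linarith)
    calc k₁ * (2:ℝ) ^ ((1:ℝ) - p) / (p - 1) * c ^ ((n:ℝ) - 2 * s)
        = k₁ * ((2:ℝ) ^ ((1:ℝ) - p) * c ^ ((1:ℝ) - p) / (p - 1)) := by
          rw [h1p]; ring
      _ ≤ k₁ * ((c + 1) ^ ((1:ℝ) - p) / (p - 1)) := by
          apply mul_le_mul_of_nonneg_left _ hk₁.le
          apply div_le_div_of_nonneg_right _ hp1.le
          rw [← hC]; exact hB
      _ ≤ k₁ * (∑' m : ℕ, (c + 1 + (m:ℝ)) ^ (-p)) :=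
          mul_le_mul_of_nonneg_left hlow hk₁.le
      _ ≤ ∑' m : ℕ, Nf n (a + 1 + m) / (((a + 1 + m : ℕ) : ℝ) + t) ^ (2 * s) := hA
  · -- upper bound
    have hA := Summable.tsum_le_tsum (fun m => (hterm m).2) hTsummable (hsummable.mul_left k₂)
    rw [tsum_mul_left] at hA
    calc (∑' m : ℕ, Nf n (a + 1 + m) / (((a + 1 + m : ℕ) : ℝ) + t) ^ (2 * s))
        ≤ k₂ * (∑' m : ℕ, (c + 1 + (m:ℝ)) ^ (-p)) := hA
      _ ≤ k₂ * (c ^ ((1:ℝ) - p) / (p - 1)) := mul_le_mul_of_nonneg_left hup hk₂.le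
      _ = k₂ / (p - 1) * c ^ ((n:ℝ) - 2 * s) := by rw [h1p]; ring
end

section
/- Let n ≥ 1 and let s > t ≥ 0 be real numbers. Let T : lp (fun _ : ℕ => ℝ) 2 → lp (fun _ : ℕ => ℝ) 2 be a continuous linear map such that (T φ) m = (m + (n−1)/2)^{t−s} · φ m for every φ ∈ ℓ² and every m ∈ ℕ. Then T is a compact operator. (This diagonal operator realizes the inclusion L²_s(S^n) ↪ L²_t(S^n) in spherical harmonic coordinates; its compactness, proved by approximating with the finite-rank truncations T_a, gives the compactness of the Sobolev embedding.) -/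
/-!
A diagonal operator `φ ↦ (d i * φ i)ᵢ` on `ℓᵖ` differs from its truncation to a finite set `s` of
coordinates by an operator of norm at most `sup_{i ∉ s} ‖d i‖`. When `d → 0` along the cofinite
filter these finite-rank truncations therefore converge to it in operator norm, and compact
operators form a closed set. For the Sobolev inclusion, `d m = (m + (n - 1) / 2) ^ (t - s) → 0`
because `t - s < 0`.
-/

open Filter Topology
open scoped ENNReal

namespace lp

variable {α 𝕜 : Type*} [DecidableEq α] [NontriviallyNormedField 𝕜] {p : ℝ≥0∞} [Fact (1 ≤ p)]

variable (𝕜 p) in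
noncomputable def truncation (s : Finset α) : lp (fun _ : α => 𝕜) p →L[𝕜] lp (fun _ : α => 𝕜) p :=
  ∑ i ∈ s, (singleContinuousLinearMap 𝕜 _ p i).comp (evalCLM 𝕜 _ p i)

theorem truncation_apply_apply (s : Finset α) (φ : lp (fun _ : α => 𝕜) p) (j : α) :
    truncation 𝕜 p s φ j = if j ∈ s then φ j else 0 := by
  rw [truncation, sum_apply, coeFn_sum, Finset.sum_apply]
  simp [evalCLM, Pi.single_apply]

theorem isCompactOperator_truncation [ProperSpace 𝕜] (s : Finset α) :
    IsCompactOperator (truncation 𝕜 p s) := by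
  refine Submodule.sum_mem (compactOperator (RingHom.id 𝕜) _ _) fun i _ => ?_
  exact (isCompactOperator_of_locallyCompactSpace_rng
    (singleContinuousLinearMap 𝕜 (fun _ : α => 𝕜) p i)).comp_clm (evalCLM 𝕜 (fun _ : α => 𝕜) p i)

theorem norm_truncation_comp_sub_le {T : lp (fun _ : α => 𝕜) p →L[𝕜] lp (fun _ : α => 𝕜) p}
    {d : α → 𝕜} (hT : ∀ φ i, T φ i = d i * φ i) {s : Finset α} {C : ℝ} (hC : 0 ≤ C)
    (hd : ∀ i ∉ s, ‖d i‖ ≤ C) : ‖truncation 𝕜 p s ∘L T - T‖ ≤ C := by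
  have hp : p ≠ 0 := (zero_lt_one.trans_le Fact.out).ne'
  refine ContinuousLinearMap.opNorm_le_bound _ hC fun φ => ?_
  calc ‖(truncation 𝕜 p s ∘L T - T) φ‖ ≤ ‖C • toNorm φ‖ := by
        refine norm_mono hp fun i => ?_
        have hbound : ‖(C • toNorm φ) i‖ = C * ‖φ i‖ := by simp [abs_of_nonneg hC]
        rw [hbound, sub_apply, ContinuousLinearMap.comp_apply, coeFn_sub, Pi.sub_apply,
          truncation_apply_apply]
        by_cases hi : i ∈ s
        · simpa [hi] using mul_nonneg hC (norm_nonneg (φ i))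
        · simpa [hi, hT] using mul_le_mul_of_nonneg_right (hd i hi) (norm_nonneg (φ i))
    _ = C * ‖φ‖ := by rw [norm_const_smul hp, norm_toNorm, Real.norm_of_nonneg hC]

theorem isCompactOperator_of_apply_eq_mul [ProperSpace 𝕜]
    {T : lp (fun _ : α => 𝕜) p →L[𝕜] lp (fun _ : α => 𝕜) p} {d : α → 𝕜}
    (hT : ∀ φ i, T φ i = d i * φ i) (hd : Tendsto d cofinite (𝓝 0)) : IsCompactOperator T := by
  refine isCompactOperator_of_tendsto (l := atTop) (F := fun s => truncation 𝕜 p s ∘L T) ?_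
    (Eventually.of_forall fun s => (isCompactOperator_truncation s).comp_clm T)
  refine Metric.tendsto_nhds.2 fun ε hε => ?_
  have hsmall : ∀ᶠ i in cofinite, ‖d i‖ ≤ ε / 2 :=
    (hd.eventually (Metric.closedBall_mem_nhds 0 (half_pos hε))).mono fun i hi => by simpa using hi
  obtain ⟨s₀, hs₀⟩ : ∃ s₀ : Finset α, ∀ i ∉ s₀, ‖d i‖ ≤ ε / 2 :=
    ⟨(eventually_cofinite.1 hsmall).toFinset, fun i hi => by simpa using hi⟩
  filter_upwards [eventually_ge_atTop s₀] with s hs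
  rw [dist_eq_norm]
  exact (norm_truncation_comp_sub_le hT (half_pos hε).le
    fun i hi => hs₀ i fun h => hi (hs h)).trans_lt (half_lt_self hε)

end lp

theorem diagonal_inclusion_compact_general (n : ℕ) (s t : ℝ) (hts : t < s)
    (T : lp (fun _ : ℕ => ℝ) 2 →L[ℝ] lp (fun _ : ℕ => ℝ) 2)
    (hT : ∀ (φ : lp (fun _ : ℕ => ℝ) 2) (m : ℕ),
      T φ m = ((m : ℝ) + ((n : ℝ) - 1) / 2) ^ (t - s) * φ m) :
    IsCompactOperator T := by
  refine lp.isCompactOperator_of_apply_eq_mul hT ?_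
  rw [Nat.cofinite_eq_atTop, show t - s = -(s - t) by ring]
  exact (tendsto_rpow_neg_atTop (sub_pos.2 hts)).comp
    (tendsto_atTop_add_const_right _ _ tendsto_natCast_atTop_atTop)

/-- The diagonal operator on `ℓ²` with entries `(m + (n-1)/2)^{t-s}`
(`s > t ≥ 0`), which realizes the inclusion `L²_s(Sⁿ) ↪ L²_t(Sⁿ)` in spherical harmonic
coordinates, is a compact operator. -/
theorem diagonal_inclusion_compact (n : ℕ) (hn : 1 ≤ n) (s t : ℝ) (ht : 0 ≤ t) (hts : t < s)
    (T : lp (fun _ : ℕ => ℝ) 2 →L[ℝ] lp (fun _ : ℕ => ℝ) 2)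
    (hT : ∀ (φ : lp (fun _ : ℕ => ℝ) 2) (m : ℕ),
      T φ m = ((m : ℝ) + ((n : ℝ) - 1) / 2) ^ (t - s) * φ m) :
    IsCompactOperator T :=
  diagonal_inclusion_compact_general n s t hts T hT
end
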